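/- arXiv:2604.18303 — 6 statements merged into one kernel-verified Lean document; each statement's English description precedes it below -/
import Mathlib

section
/- Let X be a Banach space, (Ω,μ) a measure space with μ ≠ 0, p ∈ (0,∞], and F : Ω → 𝓛(X) such that ω ↦ F(ω)e is strongly measurable and belongs to L^p(μ;X) for every e ∈ X. Assume in addition that F(ω) is invertible for μ-a.e. ω, i.e. there is W : Ω → 𝓛(X) with F(ω)∘W(ω) = W(ω)∘F(ω) = id_X for μ-a.e. ω. Then there exist constants 0 < c ≤ C < ∞ such that c‖e‖_X ≤ ‖F(·)e‖_{L^p(μ;X)} ≤ C‖e‖_X for all e ∈ X. -/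
open MeasureTheory ENNReal NNReal

/-- If, in addition to the hypotheses of Statement 1, the measure `μ`
is nonzero and `F ω` is invertible for `μ`-a.e. `ω` (witnessed by `G` with
`F ω ∘ G ω = G ω ∘ F ω = id` a.e.), then the quasi-norm `e ↦ ‖F(·)e‖_{L^p(μ;X)}`
is equivalent to the norm of `X`: there exist `0 < c ≤ C < ∞` with
`c ‖e‖ ≤ ‖F(·)e‖_{L^p(μ;X)} ≤ C ‖e‖` for all `e ∈ X`. -/
theorem statement2 {Ω X : Type*} [MeasurableSpace Ω]
    [NormedAddCommGroup X] [NormedSpace ℝ X] [CompleteSpace X]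
    (μ : Measure Ω) (hμ : μ ≠ 0) (p : ℝ≥0∞) (hp : p ≠ 0)
    (F : Ω → X →L[ℝ] X)
    (hFmeas : ∀ e : X, StronglyMeasurable fun ω => F ω e)
    (hFp : ∀ e : X, MemLp (fun ω => F ω e) p μ)
    (G : Ω → X →L[ℝ] X)
    (hinv : ∀ᵐ ω ∂μ, (F ω).comp (G ω) = ContinuousLinearMap.id ℝ X ∧
      (G ω).comp (F ω) = ContinuousLinearMap.id ℝ X) :
    ∃ c C : ℝ≥0, 0 < c ∧ c ≤ C ∧ ∀ e : X,
      (c : ℝ≥0∞) * (‖e‖₊ : ℝ≥0∞) ≤ eLpNorm (fun ω => F ω e) p μ ∧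
      eLpNorm (fun ω => F ω e) p μ ≤ (C : ℝ≥0∞) * (‖e‖₊ : ℝ≥0∞) := by
  classical
  -- ### Lower bound
  have hlower : ∃ cl : ℝ≥0∞, 0 < cl ∧ cl ≠ ∞ ∧
      ∀ e : X, cl * (‖e‖₊ : ℝ≥0∞) ≤ eLpNorm (fun ω => F ω e) p μ := by
    set Good : Set Ω := {ω | (G ω).comp (F ω) = ContinuousLinearMap.id ℝ X} with hGoodDef
    have hGoodc : μ Goodᶜ = 0 := by
      have : ∀ᵐ ω ∂μ, ω ∈ Good := hinv.mono fun ω h => h.2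
      exact ae_iff.1 this
    -- the sets where `‖G ω‖ ≤ n`
    set S : ℕ → Set Ω := fun n => Good ∩ {ω | ‖G ω‖ ≤ (n : ℝ)} with hSdef
    have hGoodsub : Good ⊆ ⋃ n, S n := fun ω hω =>
      Set.mem_iUnion.2 ⟨⌈‖G ω‖⌉₊, hω, by simpa using Nat.le_ceil ‖G ω‖⟩
    have hGoodpos : μ Good ≠ 0 := by
      intro h
      apply hμ
      rw [← Measure.measure_univ_eq_zero]
      have h2 := measure_union_le (μ := μ) Good Goodᶜ
      simpa [Set.union_compl_self, h, hGoodc] using h2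
    obtain ⟨n, hn⟩ : ∃ n, 0 < μ (S n) := by
      apply exists_measure_pos_of_not_measure_iUnion_null
      intro h
      exact hGoodpos (measure_mono_null hGoodsub h)
    set N : ℝ := (n : ℝ) + 1 with hNdef
    have hNpos : 0 < N := by positivity
    set m : ℝ≥0∞ := min (μ (S n)) 1 with hmdef
    have hmpos : 0 < m := lt_min hn zero_lt_one
    have hmne : m ≠ ∞ := ((min_le_right _ _).trans_lt one_lt_top).ne
    set cl : ℝ≥0∞ := (‖N⁻¹‖₊ : ℝ≥0∞) * m ^ (1 / p.toReal) with hcldef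
    refine ⟨cl, ?_, ?_, ?_⟩
    · apply ENNReal.mul_pos
      · simpa using (inv_ne_zero hNpos.ne')
      · exact (ENNReal.rpow_pos hmpos hmne).ne'
    · refine ENNReal.mul_ne_top ENNReal.coe_ne_top ?_
      exact (ENNReal.rpow_le_one (min_le_right _ _) (by positivity)).trans_lt one_lt_top |>.ne
    · intro e
      set E : Set Ω := {ω | ‖e‖ ≤ N * ‖F ω e‖} with hEdef
      have hEmeas : MeasurableSet E :=
        measurableSet_le measurable_const
          (measurable_const.mul (hFmeas e).norm.measurable)
      have hSE : S n ⊆ E := by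
        rintro ω ⟨hω1, hω2⟩
        have he : (G ω) ((F ω) e) = e := by
          have := congrArg (fun T : X →L[ℝ] X => T e) hω1
          simpa using this
        have h1 : ‖e‖ ≤ ‖G ω‖ * ‖F ω e‖ := by
          conv_lhs => rw [← he]
          exact (G ω).le_opNorm _
        refine h1.trans (mul_le_mul_of_nonneg_right (hω2.trans ?_) (norm_nonneg _))
        simp [hNdef]
      have hEpos : μ E ≠ 0 := fun h => hn.ne' (measure_mono_null hSE h)
      set ce : ℝ := N⁻¹ * ‖e‖ with hcedef
      have hind : ∀ ω, ‖E.indicator (fun _ => ce) ω‖ ≤ ‖F ω e‖ := by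
        intro ω
        by_cases hω : ω ∈ E
        · rw [Set.indicator_of_mem hω]
          have hce : 0 ≤ ce := by positivity
          rw [Real.norm_of_nonneg hce, hcedef, inv_mul_le_iff₀ hNpos]
          exact hω
        · simp [Set.indicator_of_notMem hω]
      have h1 : eLpNorm (E.indicator fun _ => ce) p μ ≤ eLpNorm (fun ω => F ω e) p μ :=
        eLpNorm_mono_ae (Filter.Eventually.of_forall hind)
      rw [eLpNorm_indicator_const' hEmeas hEpos hp] at h1
      refine le_trans ?_ h1
      have hcen : (‖ce‖₊ : ℝ≥0∞) = (‖N⁻¹‖₊ : ℝ≥0∞) * ‖e‖₊ := by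
        rw [hcedef, nnnorm_mul, ENNReal.coe_mul, nnnorm_norm]
      rw [enorm_eq_nnnorm, hcen, hcldef]
      calc (‖N⁻¹‖₊ : ℝ≥0∞) * m ^ (1 / p.toReal) * ‖e‖₊
          ≤ (‖N⁻¹‖₊ : ℝ≥0∞) * μ E ^ (1 / p.toReal) * ‖e‖₊ := by
            gcongr
            exact (min_le_left _ _).trans (measure_mono hSE)
        _ = (‖N⁻¹‖₊ : ℝ≥0∞) * ‖e‖₊ * μ E ^ (1 / p.toReal) := by ring
  -- ### Upper bound (Baire category)
  have hupper : ∃ Cu : ℝ≥0∞, Cu ≠ ∞ ∧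
      ∀ e : X, eLpNorm (fun ω => F ω e) p μ ≤ Cu * (‖e‖₊ : ℝ≥0∞) := by
    set A : ℕ → Set X := fun n => {e | eLpNorm (fun ω => F ω e) p μ ≤ n} with hAdef
    have hA_closed : ∀ n, IsClosed (A n) := by
      intro n
      apply IsSeqClosed.isClosed
      intro ek e hmem htend
      have hlim : eLpNorm (fun ω => F ω e) p μ ≤
          Filter.atTop.liminf fun k => eLpNorm (fun ω => F ω (ek k)) p μ := by
        refine Lp.eLpNorm_lim_le_liminf_eLpNorm
          (fun k => (hFmeas (ek k)).aestronglyMeasurable) _ ?_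
        refine Filter.Eventually.of_forall fun ω => ?_
        exact ((F ω).continuous.tendsto e).comp htend
      refine hlim.trans ?_
      calc Filter.atTop.liminf (fun k => eLpNorm (fun ω => F ω (ek k)) p μ)
          ≤ Filter.atTop.liminf (fun _ : ℕ => (n : ℝ≥0∞)) :=
            Filter.liminf_le_liminf (Filter.Eventually.of_forall fun k => hmem k)
        _ = n := Filter.liminf_const _
    have hA_union : ⋃ n, A n = Set.univ := by
      ext e
      simp only [Set.mem_iUnion, Set.mem_univ, iff_true]
      obtain ⟨k, hk⟩ := ENNReal.exists_nat_gt (hFp e).2.ne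
      exact ⟨k, hk.le⟩
    obtain ⟨n, e₀, he₀⟩ := nonempty_interior_of_iUnion_of_closed hA_closed hA_union
    rw [mem_interior_iff_mem_nhds, Metric.mem_nhds_iff] at he₀
    obtain ⟨ε, hε, hball⟩ := he₀
    -- bound on a small ball
    have hsmall : ∀ e : X, ‖e‖ < ε →
        eLpNorm (fun ω => F ω e) p μ ≤ LpAddConst p * (n + n) := by
      intro e he
      have h1 : e₀ + e ∈ Metric.ball e₀ ε := by
        simp [Metric.mem_ball, dist_eq_norm, he]
      have h2 : e₀ ∈ Metric.ball e₀ ε := Metric.mem_ball_self hε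
      have heq : (fun ω => F ω e) =
          (fun ω => F ω (e₀ + e)) - fun ω => F ω e₀ := by
        funext ω
        simp [map_add]
      rw [heq]
      calc eLpNorm ((fun ω => F ω (e₀ + e)) - fun ω => F ω e₀) p μ
          ≤ LpAddConst p * (eLpNorm (fun ω => F ω (e₀ + e)) p μ +
              eLpNorm (fun ω => F ω e₀) p μ) :=
            eLpNorm_sub_le' (hFmeas _).aestronglyMeasurable
              (hFmeas _).aestronglyMeasurable p
        _ ≤ LpAddConst p * ((n : ℝ≥0∞) + n) := by
            gcongr
            · exact hball h1
            · exact hball h2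
    set Cu : ℝ≥0∞ := ((2 / ε).toNNReal : ℝ≥0∞) * (LpAddConst p * (n + n)) with hCudef
    refine ⟨Cu, ?_, ?_⟩
    · refine ENNReal.mul_ne_top ENNReal.coe_ne_top ?_
      exact ENNReal.mul_ne_top (LpAddConst_lt_top p).ne (by simp)
    · intro e
      rcases eq_or_ne e 0 with rfl | he
      · have : (fun ω => F ω (0 : X)) = fun _ : Ω => (0 : X) := by
          funext ω; simp
        simp [this]
      · set t : ℝ := ε / (2 * ‖e‖) with htdef
        have hnorm : (0 : ℝ) < ‖e‖ := norm_pos_iff.mpr he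
        have ht : 0 < t := by positivity
        have hsmul : (fun ω => F ω e) = t⁻¹ • fun ω => F ω (t • e) := by
          funext ω
          simp [ContinuousLinearMap.map_smul, smul_smul, inv_mul_cancel₀ ht.ne']
        have hte : ‖t • e‖ < ε := by
          rw [norm_smul, Real.norm_of_nonneg ht.le, htdef]
          rw [div_mul_eq_mul_div, mul_comm 2 ‖e‖, ← div_div, mul_div_assoc,
            div_self hnorm.ne', mul_one]
          linarith
        have h3 := hsmall (t • e) hte
        rw [hsmul, eLpNorm_const_smul]
        have h4 : (‖t⁻¹‖₊ : ℝ≥0∞) = ((2 / ε).toNNReal : ℝ≥0∞) * ‖e‖₊ := by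
          have ht' : t⁻¹ = (2 / ε) * ‖e‖ := by
            rw [htdef]; field_simp
          rw [ht', nnnorm_mul, ENNReal.coe_mul, nnnorm_norm,
            Real.nnnorm_of_nonneg (by positivity),
            Real.toNNReal_of_nonneg (by positivity : (0:ℝ) ≤ 2 / ε)]
        calc (‖t⁻¹‖₊ : ℝ≥0∞) * eLpNorm (fun ω => F ω (t • e)) p μ
            ≤ (‖t⁻¹‖₊ : ℝ≥0∞) * (LpAddConst p * (n + n)) := by gcongr
          _ = Cu * ‖e‖₊ := by rw [h4, hCudef, mul_right_comm]
  obtain ⟨cl, hcl0, hcltop, hlow⟩ := hlower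
  obtain ⟨Cu, hCutop, hupp⟩ := hupper
  refine ⟨cl.toNNReal, max Cu.toNNReal cl.toNNReal,
    ENNReal.toNNReal_pos hcl0.ne' hcltop, le_max_right _ _, fun e => ⟨?_, ?_⟩⟩
  · rw [ENNReal.coe_toNNReal hcltop]
    exact hlow e
  · refine (hupp e).trans ?_
    gcongr
    rw [← ENNReal.coe_toNNReal hCutop]
    exact_mod_cast le_max_left _ _
end

section
/- Let X be a separable Banach space and V : ℝⁿ → 𝓛(X) be such that x ↦ V(x)e is (a.e. with respect to Lebesgue measure equal to a) strongly measurable function for every e ∈ X, and such that V(x) is invertible for a.e. x ∈ ℝⁿ, i.e. there is W : ℝⁿ → 𝓛(X) with V(x)∘W(x) = W(x)∘V(x) = id_X for a.e. x. Then for every e ∈ X the function x ↦ W(x)e is a.e. equal to a strongly measurable function (i.e. it is almost-everywhere strongly measurable with respect to Lebesgue measure on ℝⁿ). -/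
/-!
Modify `V` on a measurable null set so that `x ↦ V x e` is strongly measurable for every `e`
(it suffices to do this on a dense sequence, by continuity of each `V x`), and `V x` is
invertible with inverse `W x` everywhere (set both to the identity on the null set).
Then `(x, y) ↦ V x y` is jointly measurable, so the graph `{(x, y) | V x y = e}` of
`x ↦ W x e` is a Borel set, and by the Lusin–Souslin theorem a map between standard Borel
spaces with Borel graph is measurable.
-/

open MeasureTheory Set Filter TopologicalSpace

theorem measurable_of_measurableSet_graph {α β : Type*} [MeasurableSpace α]
    [StandardBorelSpace α] [MeasurableSpace β] [StandardBorelSpace β] {f : α → β}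
    (hf : MeasurableSet {p : α × β | p.2 = f p.1}) : Measurable f := by
  intro U hU
  have hpre : f ⁻¹' U = Prod.fst '' ({p : α × β | p.2 = f p.1} ∩ univ ×ˢ U) := by
    ext x
    constructor
    · intro hx
      exact ⟨(x, f x), ⟨rfl, mem_univ x, hx⟩, rfl⟩
    · rintro ⟨⟨x, y⟩, ⟨hxy : y = f x, -, hy : y ∈ U⟩, rfl⟩
      exact hxy ▸ hy
  rw [hpre]
  refine (hf.inter (MeasurableSet.univ.prod hU)).image_of_measurable_injOn measurable_fst ?_
  rintro ⟨x, y⟩ ⟨hy : y = f x, -⟩ ⟨x', y'⟩ ⟨hy' : y' = f x', -⟩ (rfl : x = x')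
  rw [hy, hy']

theorem stronglyMeasurable_apply_of_denseRange {α E F : Type*} [MeasurableSpace α]
    [TopologicalSpace E] [FrechetUrysohnSpace E] [TopologicalSpace F] [PseudoMetrizableSpace F]
    {u : α → E → F} (hu : ∀ x, Continuous (u x)) {d : ℕ → E} (hd : DenseRange d)
    (hmeas : ∀ k, StronglyMeasurable fun x => u x (d k)) (e : E) :
    StronglyMeasurable fun x => u x e := by
  obtain ⟨y, hy_mem, hy_tendsto⟩ := mem_closure_iff_seq_limit.1 (hd e)
  choose ψ hψ using hy_mem
  refine stronglyMeasurable_of_tendsto atTop (fun m => hmeas (ψ m)) ?_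
  rw [tendsto_pi_nhds]
  intro x
  simp only [hψ]
  exact ((hu x).tendsto e).comp hy_tendsto

section OperatorFamilies

variable {α 𝕜 E F : Type*} [MeasurableSpace α] [NontriviallyNormedField 𝕜]
  [NormedAddCommGroup E] [NormedSpace 𝕜 E] [NormedAddCommGroup F] [NormedSpace 𝕜 F]

theorem exists_stronglyMeasurable_apply_ae_eq [SeparableSpace E]
    {μ : Measure α} {V : α → E →L[𝕜] F} (hV : ∀ e, AEStronglyMeasurable (fun x => V x e) μ) :
    ∃ V' : α → E →L[𝕜] F, (∀ e, StronglyMeasurable fun x => V' x e) ∧ V' =ᵐ[μ] V := by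
  classical
  have : Nonempty E := ⟨0⟩
  let d := denseSeq E
  choose g hg hVg using fun k => hV (d k)
  have hgood : ∀ᵐ x ∂μ, ∀ k, V x (d k) = g k x := ae_all_iff.2 hVg
  obtain ⟨T, hbad, hT, hT0⟩ := exists_measurable_superset_of_null (ae_iff.1 hgood)
  refine ⟨fun x => if x ∈ T then 0 else V x, ?_, ?_⟩
  · refine stronglyMeasurable_apply_of_denseRange (fun x => ContinuousLinearMap.continuous _)
      (denseRange_denseSeq E) fun k => ?_
    have heq : (fun x => (if x ∈ T then 0 else V x) (d k)) =
        fun x => if x ∈ T then 0 else g k x := by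
      funext x
      by_cases hx : x ∈ T
      · simp [hx]
      · simp only [hx, if_false]
        exact not_not.1 (fun h => hx (hbad h)) k
    rw [heq]
    exact StronglyMeasurable.ite hT stronglyMeasurable_const (hg k)
  · refine measure_mono_null (fun x hx => ?_) hT0
    by_contra hxT
    exact hx (if_neg hxT)

variable [MeasurableSpace E] [BorelSpace E]

theorem measurable_apply_of_comp_eq_id [StandardBorelSpace α] [PolishSpace E]
    {V W : α → E →L[𝕜] E}
    (hinv : ∀ x, (V x).comp (W x) = ContinuousLinearMap.id 𝕜 E ∧
      (W x).comp (V x) = ContinuousLinearMap.id 𝕜 E)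
    (hV : ∀ e, StronglyMeasurable fun x => V x e) (f : E) :
    Measurable fun x => W x f := by
  have hjoint : Measurable fun p : α × E => V p.1 p.2 :=
    (stronglyMeasurable_uncurry_of_continuous_of_stronglyMeasurable
      (fun x => (V x).continuous) hV).measurable.comp measurable_swap
  have hgraph : {p : α × E | p.2 = W p.1 f} = {p | V p.1 p.2 = f} := by
    ext ⟨x, y⟩
    have hWx : V x (W x f) = f := congr($((hinv x).1) f)
    have hVx : Function.LeftInverse (W x) (V x) := fun y => congr($((hinv x).2) y)
    constructor
    · rintro (rfl : y = W x f)
      exact hWx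
    · rintro (hy : V x y = f)
      rw [← hy]
      exact (hVx y).symm
  refine measurable_of_measurableSet_graph ?_
  rw [hgraph]
  exact hjoint (measurableSet_singleton f)

theorem aestronglyMeasurable_apply_of_ae_comp_eq_id [StandardBorelSpace α]
    [PolishSpace E] {μ : Measure α} {V W : α → E →L[𝕜] E}
    (hinv : ∀ᵐ x ∂μ, (V x).comp (W x) = ContinuousLinearMap.id 𝕜 E ∧
      (W x).comp (V x) = ContinuousLinearMap.id 𝕜 E)
    (hV : ∀ e, StronglyMeasurable fun x => V x e) (f : E) :
    AEStronglyMeasurable (fun x => W x f) μ := by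
  classical
  obtain ⟨T, hbad, hT, hT0⟩ := exists_measurable_superset_of_null (ae_iff.1 hinv)
  have hgood : ∀ x ∉ T, (V x).comp (W x) = ContinuousLinearMap.id 𝕜 E ∧
      (W x).comp (V x) = ContinuousLinearMap.id 𝕜 E := fun x hx => not_not.1 fun h => hx (hbad h)
  let V' x := if x ∈ T then ContinuousLinearMap.id 𝕜 E else V x
  let W' x := if x ∈ T then ContinuousLinearMap.id 𝕜 E else W x
  have hW'meas : Measurable fun x => W' x f := by
    refine measurable_apply_of_comp_eq_id (V := V') (fun x => ?_) (fun e => ?_) f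
    · by_cases hx : x ∈ T
      · simp only [V', W', if_pos hx, ContinuousLinearMap.id_comp, and_self]
      · simpa only [V', W', if_neg hx] using hgood x hx
    · have hV'e : (fun x => V' x e) = fun x => if x ∈ T then e else V x e := by
        funext x
        split_ifs <;> simp only [V', *, ContinuousLinearMap.id_apply, if_true, if_false]
      rw [hV'e]
      exact StronglyMeasurable.ite hT stronglyMeasurable_const (hV e)
  refine hW'meas.stronglyMeasurable.aestronglyMeasurable.congr ?_
  refine measure_mono_null (fun x hx => ?_) hT0
  by_contra hxT
  exact hx (show W' x f = W x f by simp only [W', if_neg hxT])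

end OperatorFamilies

/-- Let `X` be a separable Banach space and `V : ℝⁿ → 𝓛(X)` be such
that `x ↦ V x e` is a.e. strongly measurable for every `e`, and such that `V x` is
invertible for a.e. `x` (witnessed by `W` with `V x ∘ W x = W x ∘ V x = id` a.e.).
Then `x ↦ W x e` is a.e. strongly measurable for every `e ∈ X`. -/
theorem statement3 {n : ℕ} {X : Type*} [NormedAddCommGroup X] [NormedSpace ℝ X]
    [CompleteSpace X] [TopologicalSpace.SeparableSpace X]
    (V W : (Fin n → ℝ) → X →L[ℝ] X)
    (hV : ∀ e : X, AEStronglyMeasurable (fun x => V x e) (volume : Measure (Fin n → ℝ)))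
    (hinv : ∀ᵐ x ∂(volume : Measure (Fin n → ℝ)),
      (V x).comp (W x) = ContinuousLinearMap.id ℝ X ∧
        (W x).comp (V x) = ContinuousLinearMap.id ℝ X) :
    ∀ e : X, AEStronglyMeasurable (fun x => W x e) (volume : Measure (Fin n → ℝ)) := by
  borelize X
  obtain ⟨V', hV'meas, hV'V⟩ := exists_stronglyMeasurable_apply_ae_eq hV
  have hinv' : ∀ᵐ x ∂(volume : Measure (Fin n → ℝ)),
      (V' x).comp (W x) = ContinuousLinearMap.id ℝ X ∧
        (W x).comp (V' x) = ContinuousLinearMap.id ℝ X := by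
    filter_upwards [hinv, hV'V] with x hx hx'
    rwa [hx']
  exact aestronglyMeasurable_apply_of_ae_comp_eq_id hinv' hV'meas
end

section
/- Let p ∈ (0,1], X a Banach space, V a weight on ℝⁿ with values in 𝓛(X) that is a p-weight, and C ∈ [0,∞). Then the following three conditions are equivalent: (i) for every cube Q ⊂ ℝⁿ and every e ∈ X, ρ_{Ł^p(Q,V)}(V(y)⁻¹e) ≤ C‖e‖_X for a.e. y ∈ Q; (ii) for every cube Q and every e ∈ X, ρ_{Ł^p(Q,V)}(e) ≤ C·ess inf_{y∈Q} ‖V(y)e‖_X; (iii) for every cube Q and every strongly measurable f : ℝⁿ → X, ρ_{Ł^p(Q,V)}(f(y)) ≤ C‖V(y)f(y)‖_X for a.e. y ∈ Q. -/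
open MeasureTheory ENNReal NNReal

noncomputable section

namespace OpWeight

variable {n : ℕ} {X : Type*} [NormedAddCommGroup X] [NormedSpace ℝ X]

/-- The axis-parallel cube in `ℝⁿ` with lower corner `c` and side length `l`. -/
def cube (c : Fin n → ℝ) (l : ℝ) : Set (Fin n → ℝ) :=
  {y | ∀ i, y i ∈ Set.Ico (c i) (c i + l)}

/-- `ρ_{Ł^u(Q,V)}(e) := (⨍_Q ‖V x e‖ ^ u dx) ^ (1/u)`, valued in `[0,∞]`. -/
def rho (V : (Fin n → ℝ) → X →L[ℝ] X) (Q : Set (Fin n → ℝ)) (u : ℝ) (e : X) : ℝ≥0∞ :=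
  (⨍⁻ x in Q, (‖V x e‖₊ : ℝ≥0∞) ^ u ∂volume) ^ (1 / u)

/-- `ρ_{Ł^u(Q,V^{-*})}(e') := (⨍_Q ‖e' ∘ (V x)⁻¹‖ ^ u dx) ^ (1/u)`, where `W = V⁻¹`. -/
def rhoD (W : (Fin n → ℝ) → X →L[ℝ] X) (Q : Set (Fin n → ℝ)) (u : ℝ)
    (e' : X →L[ℝ] ℝ) : ℝ≥0∞ :=
  (⨍⁻ x in Q, (‖e'.comp (W x)‖₊ : ℝ≥0∞) ^ u ∂volume) ^ (1 / u)

/-- The dual norm `ρ*(e') := sup_{e ≠ 0} |⟨e', e⟩| / ρ(e)` on `X*` of a quasi-norm on `X`. -/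
def dualNorm (ρ : X → ℝ≥0∞) (e' : X →L[ℝ] ℝ) : ℝ≥0∞ :=
  ⨆ (e : X) (_ : e ≠ 0), (‖e' e‖₊ : ℝ≥0∞) / ρ e

/-- The dual norm of a quasi-norm on `X*`, restricted to `X`. -/
def dualNorm' (ρ : (X →L[ℝ] ℝ) → ℝ≥0∞) (e : X) : ℝ≥0∞ :=
  ⨆ (e' : X →L[ℝ] ℝ) (_ : e' ≠ 0), (‖e' e‖₊ : ℝ≥0∞) / ρ e'

/-- `V` is an operator-valued weight on `ℝⁿ`, with a.e. inverse `W`: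
`x ↦ V x e` is strongly measurable for every `e`, `V x` is invertible at a.e. `x`
(with inverse `W x`), and `x ↦ W x e = (V x)⁻¹ e` is a.e. strongly measurable for
every `e`. -/
structure IsWeight (V W : (Fin n → ℝ) → X →L[ℝ] X) : Prop where
  meas : ∀ e : X, StronglyMeasurable fun x => V x e
  inv : ∀ᵐ x ∂(volume : Measure (Fin n → ℝ)),
    (V x).comp (W x) = ContinuousLinearMap.id ℝ X ∧
      (W x).comp (V x) = ContinuousLinearMap.id ℝ X
  measInv : ∀ e : X, AEStronglyMeasurable (fun x => W x e) (volume : Measure (Fin n → ℝ))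

/-- `V` is a `p`-weight: `ρ_{Ł^p(Q,V)}(e)` is finite for every cube `Q` and `e ∈ X`. -/
def IsPWeight (V : (Fin n → ℝ) → X →L[ℝ] X) (p : ℝ) : Prop :=
  ∀ (c : Fin n → ℝ) (l : ℝ), 0 < l → ∀ e : X, rho V (cube c l) p e ≠ ⊤

/-- `V^{-*}` is a `q`-weight (with `W = V⁻¹`). -/
def IsPWeightDual (W : (Fin n → ℝ) → X →L[ℝ] X) (q : ℝ) : Prop :=
  ∀ (c : Fin n → ℝ) (l : ℝ), 0 < l → ∀ e' : X →L[ℝ] ℝ, rhoD W (cube c l) q e' ≠ ⊤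

/-- The conjugate exponent `p' = p / (p - 1)`. -/
def conjExp (p : ℝ) : ℝ := p / (p - 1)

/-- The operator-valued Muckenhoupt condition `V ∈ 𝒜_p` with constant `C₀`, where
`W = V⁻¹`.  For `p > 1` it reads `ρ_{Ł^{p'}(Q,V^{-*})}(e') ≤ C₀ ρ*_{Ł^p(Q,V)}(e')`,
and for `p ≤ 1` it reads `ρ_{Ł^p(Q,V)}((V y)⁻¹ e) ≤ C₀ ‖e‖` for a.e. `y ∈ Q`. -/
def IsAp (p : ℝ) (V W : (Fin n → ℝ) → X →L[ℝ] X) (C₀ : ℝ≥0) : Prop :=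
  IsWeight V W ∧ IsPWeight V p ∧
    (1 < p → IsPWeightDual W (conjExp p) ∧
      ∀ (c : Fin n → ℝ) (l : ℝ), 0 < l → ∀ e' : X →L[ℝ] ℝ,
        rhoD W (cube c l) (conjExp p) e' ≤
          (C₀ : ℝ≥0∞) * dualNorm (rho V (cube c l) p) e') ∧
    (p ≤ 1 → ∀ (c : Fin n → ℝ) (l : ℝ), 0 < l → ∀ e : X,
      ∀ᵐ y ∂((volume : Measure (Fin n → ℝ)).restrict (cube c l)),
        rho V (cube c l) p (W y e) ≤ (C₀ : ℝ≥0∞) * (‖e‖₊ : ℝ≥0∞))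

open Filter Topology TopologicalSpace

/-- Fatou-type lower semicontinuity of `rho` along convergent sequences. -/
lemma rho_le_liminf' {V : (Fin n → ℝ) → X →L[ℝ] X}
    (hV : ∀ e : X, StronglyMeasurable fun x => V x e)
    (Q : Set (Fin n → ℝ)) {p : ℝ} (hp : 0 < p) {u : X} {d : ℕ → X}
    (hd : Tendsto d atTop (𝓝 u)) :
    rho V Q p u ≤ Filter.liminf (fun k => rho V Q p (d k)) Filter.atTop := by
  have hpt : ∀ x, (‖V x u‖₊ : ℝ≥0∞) ^ p =
      Filter.liminf (fun k => (‖V x (d k)‖₊ : ℝ≥0∞) ^ p) atTop := by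
    intro x
    refine (Filter.Tendsto.liminf_eq ?_).symm
    have h1 : Tendsto (fun k => V x (d k)) atTop (𝓝 (V x u)) :=
      ((V x).continuous.tendsto u).comp hd
    have h2 : Tendsto (fun k => (‖V x (d k)‖₊ : ℝ≥0∞)) atTop (𝓝 (‖V x u‖₊ : ℝ≥0∞)) :=
      (ENNReal.continuous_coe.tendsto _).comp ((continuous_nnnorm.tendsto _).comp h1)
    exact (ENNReal.continuous_rpow_const.tendsto _).comp h2
  have hmeas : ∀ k, AEMeasurable (fun x => (‖V x (d k)‖₊ : ℝ≥0∞) ^ p)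
      ((volume.restrict Q Set.univ)⁻¹ • volume.restrict Q) :=
    fun k => (ENNReal.continuous_rpow_const.measurable.comp (hV (d k)).nnnorm.measurable.coe_nnreal_ennreal).aemeasurable
  have hlavg : (⨍⁻ x in Q, (‖V x u‖₊ : ℝ≥0∞) ^ p ∂volume) ≤
      Filter.liminf (fun k => ⨍⁻ x in Q, (‖V x (d k)‖₊ : ℝ≥0∞) ^ p ∂volume) atTop := by
    simp only [laverage_eq']
    calc (∫⁻ x, (‖V x u‖₊ : ℝ≥0∞) ^ p ∂((volume.restrict Q Set.univ)⁻¹ • volume.restrict Q))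
        = ∫⁻ x, Filter.liminf (fun k => (‖V x (d k)‖₊ : ℝ≥0∞) ^ p) atTop
            ∂((volume.restrict Q Set.univ)⁻¹ • volume.restrict Q) :=
          lintegral_congr fun x => hpt x
      _ ≤ _ := lintegral_liminf_le' hmeas
  have hmono : Monotone fun x : ℝ≥0∞ => x ^ (1 / p) :=
    fun a b hab => ENNReal.rpow_le_rpow hab (by positivity)
  calc rho V Q p u ≤ (Filter.liminf
        (fun k => ⨍⁻ x in Q, (‖V x (d k)‖₊ : ℝ≥0∞) ^ p ∂volume) atTop) ^ (1 / p) :=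
        ENNReal.rpow_le_rpow hlavg (by positivity)
    _ = Filter.liminf (fun k => rho V Q p (d k)) atTop := by
        have := (ENNReal.orderIsoRpow (1 / p) (by positivity)).liminf_apply
          (u := fun k => ⨍⁻ x in Q, (‖V x (d k)‖₊ : ℝ≥0∞) ^ p ∂volume) (f := atTop)
        simpa [ENNReal.orderIsoRpow_apply, rho] using this

lemma cube_volume_ne_zero (c : Fin n → ℝ) {l : ℝ} (hl : 0 < l) :
    (volume : Measure (Fin n → ℝ)) (cube c l) ≠ 0 := by
  have hcube : cube c l = Set.pi Set.univ fun i => Set.Ico (c i) (c i + l) := by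
    ext y; simp [cube, Set.mem_pi]
  rw [hcube, volume_pi_pi]
  simp only [Real.volume_Ico, add_sub_cancel_left]
  rw [Finset.prod_const]
  exact pow_ne_zero _ (by simp [ENNReal.ofReal_eq_zero, not_le, hl])

/-- For `p ∈ (0,1]`, a `p`-weight `V` (with a.e. inverse `W`) and
`C ∈ [0,∞)`, the following are equivalent:
(i) `ρ_{Ł^p(Q,V)}((V y)⁻¹ e) ≤ C ‖e‖` for a.e. `y ∈ Q`, all cubes `Q`, all `e`;
(ii) `ρ_{Ł^p(Q,V)}(e) ≤ C · essinf_{y ∈ Q} ‖V y e‖` for all cubes `Q` and all `e`;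
(iii) `ρ_{Ł^p(Q,V)}(f y) ≤ C ‖V y (f y)‖` for a.e. `y ∈ Q`, for all cubes `Q` and all
strongly measurable `f : ℝⁿ → X`. -/
theorem statement6 {n : ℕ} {X : Type*} [NormedAddCommGroup X] [NormedSpace ℝ X]
    [CompleteSpace X]
    (p : ℝ) (hp : 0 < p) (hp1 : p ≤ 1)
    (V W : (Fin n → ℝ) → X →L[ℝ] X) (hVW : IsWeight V W)
    (hpw : IsPWeight V p) (C : ℝ≥0) :
    List.TFAE
      [∀ (c : Fin n → ℝ) (l : ℝ), 0 < l → ∀ e : X,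
          ∀ᵐ y ∂((volume : Measure (Fin n → ℝ)).restrict (cube c l)),
            rho V (cube c l) p (W y e) ≤ (C : ℝ≥0∞) * (‖e‖₊ : ℝ≥0∞),
        ∀ (c : Fin n → ℝ) (l : ℝ), 0 < l → ∀ e : X,
          rho V (cube c l) p e ≤ (C : ℝ≥0∞) *
            essInf (fun y => (‖V y e‖₊ : ℝ≥0∞))
              ((volume : Measure (Fin n → ℝ)).restrict (cube c l)),
        ∀ (c : Fin n → ℝ) (l : ℝ), 0 < l → ∀ f : (Fin n → ℝ) → X,
          StronglyMeasurable f →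
          ∀ᵐ y ∂((volume : Measure (Fin n → ℝ)).restrict (cube c l)),
            rho V (cube c l) p (f y) ≤ (C : ℝ≥0∞) * (‖V y (f y)‖₊ : ℝ≥0∞)] := by
  tfae_have 1 → 2
  · intro h1 c l hl e
    set Q := cube c l with hQ
    set μ := (volume : Measure (Fin n → ℝ)).restrict Q with hμ
    obtain ⟨D, hDc, hDsub⟩ := (hVW.meas e).isSeparable_range
    have hae : ∀ᵐ y ∂μ, (∀ d ∈ D, rho V Q p (W y d) ≤ (C : ℝ≥0∞) * (‖d‖₊ : ℝ≥0∞)) ∧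
        ((V y).comp (W y) = ContinuousLinearMap.id ℝ X ∧
          (W y).comp (V y) = ContinuousLinearMap.id ℝ X) :=
      ((ae_ball_iff hDc).2 fun d _ => h1 c l hl d).and (ae_restrict_of_ae hVW.inv)
    have key : ∀ᵐ y ∂μ, rho V Q p e ≤ (C : ℝ≥0∞) * (‖V y e‖₊ : ℝ≥0∞) := by
      filter_upwards [hae] with y hy
      obtain ⟨hD, _, hid2⟩ := hy
      have hmem : V y e ∈ closure D := hDsub ⟨y, rfl⟩
      obtain ⟨d, hdD, hdlim⟩ := mem_closure_iff_seq_limit.1 hmem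
      have hWVe : W y (V y e) = e := by
        have := ContinuousLinearMap.ext_iff.1 hid2 e
        simpa using this
      have hWlim : Tendsto (fun k => W y (d k)) atTop (𝓝 e) := by
        have := ((W y).continuous.tendsto (V y e)).comp hdlim
        rwa [hWVe] at this
      have hnorm : Tendsto (fun k => (C : ℝ≥0∞) * (‖d k‖₊ : ℝ≥0∞)) atTop
          (𝓝 ((C : ℝ≥0∞) * (‖V y e‖₊ : ℝ≥0∞))) := by
        refine ENNReal.Tendsto.const_mul ?_ (Or.inr ENNReal.coe_ne_top)
        exact (ENNReal.continuous_coe.tendsto _).comp ((continuous_nnnorm.tendsto _).comp hdlim)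
      calc rho V Q p e ≤ Filter.liminf (fun k => rho V Q p (W y (d k))) atTop :=
            rho_le_liminf' hVW.meas Q hp hWlim
        _ ≤ Filter.liminf (fun k => (C : ℝ≥0∞) * (‖d k‖₊ : ℝ≥0∞)) atTop :=
            Filter.liminf_le_liminf (Filter.Eventually.of_forall fun k => hD (d k) (hdD k))
        _ = (C : ℝ≥0∞) * (‖V y e‖₊ : ℝ≥0∞) := hnorm.liminf_eq
    rcases eq_or_ne C 0 with hC | hC
    · haveI : (ae μ).NeBot := ae_neBot.2 (by
        rw [hμ, Ne, Measure.restrict_eq_zero]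
        exact cube_volume_ne_zero c hl)
      obtain ⟨y, hy⟩ := key.exists
      simp only [hC, ENNReal.coe_zero, zero_mul, nonpos_iff_eq_zero] at hy ⊢
      exact hy
    · have hC0 : (C : ℝ≥0∞) ≠ 0 := ENNReal.coe_ne_zero.2 hC
      have hdiv : ∀ᵐ y ∂μ, rho V Q p e / (C : ℝ≥0∞) ≤ (‖V y e‖₊ : ℝ≥0∞) := by
        filter_upwards [key] with y hy
        exact ENNReal.div_le_of_le_mul' hy
      have hle : rho V Q p e / (C : ℝ≥0∞) ≤
          essInf (fun y => (‖V y e‖₊ : ℝ≥0∞)) μ := le_essInf_of_ae_le _ hdiv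
      calc rho V Q p e = (C : ℝ≥0∞) * (rho V Q p e / (C : ℝ≥0∞)) :=
            (ENNReal.mul_div_cancel hC0 ENNReal.coe_ne_top).symm
        _ ≤ (C : ℝ≥0∞) * essInf (fun y => (‖V y e‖₊ : ℝ≥0∞)) μ := mul_le_mul_right hle _
  tfae_have 2 → 3
  · intro h2 c l hl f hf
    set Q := cube c l with hQ
    set μ := (volume : Measure (Fin n → ℝ)).restrict Q with hμ
    obtain ⟨D, hDc, hDsub⟩ := hf.isSeparable_range
    have hae : ∀ᵐ y ∂μ, ∀ d ∈ D,
        essInf (fun z => (‖V z d‖₊ : ℝ≥0∞)) μ ≤ (‖V y d‖₊ : ℝ≥0∞) :=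
      (ae_ball_iff hDc).2 fun d _ => ae_essInf_le
    filter_upwards [hae] with y hy
    have hmem : f y ∈ closure D := hDsub ⟨y, rfl⟩
    obtain ⟨d, hdD, hdlim⟩ := mem_closure_iff_seq_limit.1 hmem
    have hnorm : Tendsto (fun k => (C : ℝ≥0∞) * (‖V y (d k)‖₊ : ℝ≥0∞)) atTop
        (𝓝 ((C : ℝ≥0∞) * (‖V y (f y)‖₊ : ℝ≥0∞))) := by
      refine ENNReal.Tendsto.const_mul ?_ (Or.inr ENNReal.coe_ne_top)
      exact (ENNReal.continuous_coe.tendsto _).comp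
        ((continuous_nnnorm.tendsto _).comp (((V y).continuous.tendsto _).comp hdlim))
    calc rho V Q p (f y) ≤ Filter.liminf (fun k => rho V Q p (d k)) atTop :=
          rho_le_liminf' hVW.meas Q hp hdlim
      _ ≤ Filter.liminf (fun k => (C : ℝ≥0∞) * (‖V y (d k)‖₊ : ℝ≥0∞)) atTop := by
          refine Filter.liminf_le_liminf (Filter.Eventually.of_forall fun k => ?_)
          exact le_trans (h2 c l hl (d k)) (mul_le_mul_right (hy (d k) (hdD k)) _)
      _ = (C : ℝ≥0∞) * (‖V y (f y)‖₊ : ℝ≥0∞) := hnorm.liminf_eq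
  tfae_have 3 → 1
  · intro h3 c l hl e
    set g := (hVW.measInv e).mk _ with hgdef
    have hg : StronglyMeasurable g := (hVW.measInv e).stronglyMeasurable_mk
    have hge : ∀ᵐ x ∂(volume : Measure (Fin n → ℝ)), g x = W x e :=
      (hVW.measInv e).ae_eq_mk.symm
    filter_upwards [h3 c l hl g hg, ae_restrict_of_ae hge, ae_restrict_of_ae hVW.inv]
      with y hy hy2 hy3
    obtain ⟨hid1, _⟩ := hy3
    have hVWe : V y (W y e) = e := by
      have := ContinuousLinearMap.ext_iff.1 hid1 e
      simpa using this
    rw [hy2, hVWe] at hy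
    exact hy
  tfae_finish

end OpWeight

end
end

section
/- Let p ∈ (0,∞), β ∈ [n,∞), X a Banach space, and V a p-weight on ℝⁿ with values in 𝓛(X) that is (p,β)-doubling with constant C₀, i.e. ρ_{Ł^p(S,V)}(e) ≤ C₀·(ℓ(S)/ℓ(Q))^{(β−n)/p}·ρ_{Ł^p(Q,V)}(e) for all cubes Q ⊆ S and all e ∈ X. Then there exists a constant C, depending only on n, p, β and C₀, such that for all cubes Q,R ⊂ ℝⁿ and all e ∈ X: ρ_{Ł^p(Q,V)}(e) ≤ C·B_{n/p,(β−n)/p,β/p}(Q,R)·ρ_{Ł^p(R,V)}(e). In particular, for cubes of equal side length, ρ_{Ł^p(Q,V)}(e) ≤ C'·(1+|x_Q−x_R|/ℓ(Q))^{β/p}·ρ_{Ł^p(R,V)}(e). -/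
open MeasureTheory ENNReal NNReal

noncomputable section

namespace OpWeight

variable {n : ℕ} {X : Type*} [NormedAddCommGroup X] [NormedSpace ℝ X]

/-- The center of the cube with lower corner `c` and side length `l`. -/
def center (c : Fin n → ℝ) (l : ℝ) : Fin n → ℝ := fun i => c i + l / 2

/-- `B_{a,b,c}(Q,R)` for cubes with lower corners `c₁, c₂` and side lengths `l₁, l₂`. -/
def Bfac (a b c : ℝ) (c₁ : Fin n → ℝ) (l₁ : ℝ) (c₂ : Fin n → ℝ) (l₂ : ℝ) : ℝ :=
  (1 + l₂ / l₁) ^ a * (1 + l₁ / l₂) ^ b *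
    (1 + dist (center c₁ l₁) (center c₂ l₂) / max l₁ l₂) ^ c


lemma volume_cube (c : Fin n → ℝ) (l : ℝ) :
    volume (cube c l) = ENNReal.ofReal l ^ n := by
  have h : cube c l = Set.univ.pi fun i => Set.Ico (c i) (c i + l) := by
    ext y; simp [cube, Set.mem_pi]
  rw [h, volume_pi_pi]
  simp [Real.volume_Ico]

lemma rho_le_of_subset (V : (Fin n → ℝ) → X →L[ℝ] X) (p : ℝ) (hp : 0 < p)
    {c c' : Fin n → ℝ} {l l' : ℝ} (hl : 0 < l) (hl' : 0 < l')
    (hsub : cube c l ⊆ cube c' l') (e : X) :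
    rho V (cube c l) p e ≤
      ENNReal.ofReal ((l' / l) ^ ((n : ℝ) / p)) * rho V (cube c' l') p e := by
  set f : (Fin n → ℝ) → ℝ≥0∞ := fun x => (‖V x e‖₊ : ℝ≥0∞) ^ p with hf
  have hμQ : volume (cube c l) = ENNReal.ofReal l ^ n := volume_cube c l
  have hμS : volume (cube c' l') = ENNReal.ofReal l' ^ n := volume_cube c' l'
  have hμS0 : volume (cube c' l') ≠ 0 := by
    rw [hμS]; exact pow_ne_zero _ (ENNReal.ofReal_pos.mpr hl').ne'
  have hμStop : volume (cube c' l') ≠ ⊤ := by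
    rw [hμS]; exact ENNReal.pow_ne_top ENNReal.ofReal_ne_top
  set A := ∫⁻ x in cube c' l', f x ∂volume with hA
  have hmono : ⨍⁻ x in cube c l, f x ∂volume ≤
      (volume (cube c' l') / volume (cube c l)) * ⨍⁻ x in cube c' l', f x ∂volume := by
    rw [setLAverage_eq, setLAverage_eq]
    calc (∫⁻ x in cube c l, f x ∂volume) / volume (cube c l)
        ≤ A / volume (cube c l) :=
          ENNReal.div_le_div_right (lintegral_mono_set hsub) _
      _ = (volume (cube c' l') / volume (cube c l)) * (A / volume (cube c' l')) := by
          rw [div_eq_mul_inv, div_eq_mul_inv, div_eq_mul_inv,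
            show volume (cube c' l') * (volume (cube c l))⁻¹ * (A * (volume (cube c' l'))⁻¹)
              = (volume (cube c' l') * (volume (cube c' l'))⁻¹) * (A * (volume (cube c l))⁻¹)
              by ring,
            ENNReal.mul_inv_cancel hμS0 hμStop, one_mul]
  have hratio : (volume (cube c' l') / volume (cube c l)) ^ (1 / p)
      = ENNReal.ofReal ((l' / l) ^ ((n : ℝ) / p)) := by
    rw [hμQ, hμS, ← ENNReal.ofReal_pow hl'.le, ← ENNReal.ofReal_pow hl.le,
      ← ENNReal.ofReal_div_of_pos (by positivity), ← div_pow,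
      ENNReal.ofReal_rpow_of_nonneg (by positivity) (by positivity)]
    congr 1
    rw [← Real.rpow_natCast (l' / l) n, ← Real.rpow_mul (by positivity), mul_one_div]
  have key := ENNReal.rpow_le_rpow hmono (by positivity : (0 : ℝ) ≤ 1 / p)
  rw [ENNReal.mul_rpow_of_nonneg _ _ (by positivity : (0 : ℝ) ≤ 1 / p), hratio] at key
  exact key

lemma cube_subset_aux {c₁ c₂ : Fin n → ℝ} {l₁ l₂ : ℝ} (h₁ : 0 < l₁) :
    cube c₁ l₁ ⊆ cube (fun i => min (c₁ i) (c₂ i)) (max l₁ l₂ + dist c₁ c₂) := by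
  intro y hy i
  have h := hy i
  have hd : c₁ i - c₂ i ≤ dist c₁ c₂ := by
    have h' := dist_le_pi_dist c₁ c₂ i
    rw [Real.dist_eq] at h'
    exact le_trans (le_abs_self _) h'
  have hdn : (0 : ℝ) ≤ dist c₁ c₂ := dist_nonneg
  have hmax : l₁ ≤ max l₁ l₂ := le_max_left _ _
  refine ⟨le_trans (min_le_left _ _) h.1, ?_⟩
  show y i < min (c₁ i) (c₂ i) + (max l₁ l₂ + dist c₁ c₂)
  rcases le_total (c₁ i) (c₂ i) with hle | hle
  · rw [min_eq_left hle]; linarith [h.2]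
  · rw [min_eq_right hle]; linarith [h.2]

lemma key_real (p β : ℝ) (hp : 0 < p) (hβ : (n : ℝ) ≤ β)
    (c₁ c₂ : Fin n → ℝ) (l₁ l₂ : ℝ) (h₁ : 0 < l₁) (h₂ : 0 < l₂) :
    ((max l₁ l₂ + dist c₁ c₂) / l₁) ^ ((n : ℝ) / p) *
        ((max l₁ l₂ + dist c₁ c₂) / l₂) ^ ((β - n) / p)
      ≤ (3 / 2 : ℝ) ^ (β / p) * Bfac ((n : ℝ) / p) ((β - n) / p) (β / p) c₁ l₁ c₂ l₂ := by
  have hn0 : (0 : ℝ) ≤ n := Nat.cast_nonneg n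
  have hnp : (0 : ℝ) ≤ (n : ℝ) / p := by positivity
  have hbnp : (0 : ℝ) ≤ (β - n) / p := by
    apply div_nonneg _ hp.le; linarith
  simp only [Bfac]
  set M := max l₁ l₂ with hM
  set D := dist (center c₁ l₁) (center c₂ l₂) with hD
  have hMpos : 0 < M := lt_max_of_lt_left h₁
  have hDnn : (0 : ℝ) ≤ D := dist_nonneg
  set a := 1 + l₂ / l₁ with ha
  set b := 1 + l₁ / l₂ with hb
  set t := 1 + D / M with ht
  have hapos : 0 < a := by have h : 0 < l₂ / l₁ := by positivity
                           rw [ha]; linarith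
  have hbpos : 0 < b := by have h : 0 < l₁ / l₂ := by positivity
                           rw [hb]; linarith
  have htpos : 0 < t := by have h : 0 ≤ D / M := by positivity
                           rw [ht]; linarith
  set L := M + dist c₁ c₂ with hL
  have hcc : dist c₁ c₂ ≤ D + M / 2 := by
    rw [dist_pi_le_iff (by positivity)]
    intro i
    have hpi : dist (center c₁ l₁ i) (center c₂ l₂ i) ≤ D := dist_le_pi_dist _ _ i
    have h2 : |l₂ - l₁| ≤ M := by
      rw [abs_sub_le_iff]
      constructor
      · have := le_max_right l₁ l₂; rw [hM]; linarith
      · have := le_max_left l₁ l₂; rw [hM]; linarith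
    calc dist (c₁ i) (c₂ i)
        = |(c₁ i + l₁ / 2 - (c₂ i + l₂ / 2)) + (l₂ - l₁) / 2| := by
          rw [Real.dist_eq]; congr 1; ring
      _ ≤ |c₁ i + l₁ / 2 - (c₂ i + l₂ / 2)| + |(l₂ - l₁) / 2| := abs_add_le _ _
      _ = dist (center c₁ l₁ i) (center c₂ l₂ i) + |l₂ - l₁| / 2 := by
          rw [Real.dist_eq]
          simp only [center]
          rw [abs_div]
          norm_num
      _ ≤ D + M / 2 := by linarith
  have hMt : M * t = M + D := by
    rw [ht]; field_simp
  have hLbound : L ≤ 3 / 2 * (M * t) := by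
    rw [hMt, hL]; linarith
  have hMa : M ≤ l₁ * a := by
    have heq : l₁ * a = l₁ + l₂ := by rw [ha]; field_simp
    rw [heq, hM]
    exact max_le (by linarith) (by linarith)
  have hMb : M ≤ l₂ * b := by
    have heq : l₂ * b = l₂ + l₁ := by rw [hb]; field_simp
    rw [heq, hM]
    exact max_le (by linarith) (by linarith)
  have hL1 : L / l₁ ≤ 3 / 2 * a * t := by
    rw [div_le_iff₀ h₁]
    calc L ≤ 3 / 2 * (M * t) := hLbound
      _ ≤ 3 / 2 * ((l₁ * a) * t) :=
          mul_le_mul_of_nonneg_left (mul_le_mul_of_nonneg_right hMa htpos.le) (by norm_num)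
      _ = 3 / 2 * a * t * l₁ := by ring
  have hL2 : L / l₂ ≤ 3 / 2 * b * t := by
    rw [div_le_iff₀ h₂]
    calc L ≤ 3 / 2 * (M * t) := hLbound
      _ ≤ 3 / 2 * ((l₂ * b) * t) :=
          mul_le_mul_of_nonneg_left (mul_le_mul_of_nonneg_right hMb htpos.le) (by norm_num)
      _ = 3 / 2 * b * t * l₂ := by ring
  have hLnn : 0 ≤ L := by
    have h0 : 0 ≤ dist c₁ c₂ := dist_nonneg
    rw [hL]; linarith
  have e1 : (L / l₁) ^ ((n : ℝ) / p) ≤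
      (3 / 2 : ℝ) ^ ((n : ℝ) / p) * a ^ ((n : ℝ) / p) * t ^ ((n : ℝ) / p) := by
    calc (L / l₁) ^ ((n : ℝ) / p) ≤ (3 / 2 * a * t) ^ ((n : ℝ) / p) :=
          Real.rpow_le_rpow (by positivity) hL1 hnp
      _ = _ := by
          rw [Real.mul_rpow (by positivity) htpos.le,
            Real.mul_rpow (by norm_num) hapos.le]
  have e2 : (L / l₂) ^ ((β - n) / p) ≤
      (3 / 2 : ℝ) ^ ((β - n) / p) * b ^ ((β - n) / p) * t ^ ((β - n) / p) := by
    calc (L / l₂) ^ ((β - n) / p) ≤ (3 / 2 * b * t) ^ ((β - n) / p) :=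
          Real.rpow_le_rpow (by positivity) hL2 hbnp
      _ = _ := by
          rw [Real.mul_rpow (by positivity) htpos.le,
            Real.mul_rpow (by norm_num) hbpos.le]
  have hadd : (n : ℝ) / p + (β - n) / p = β / p := by
    rw [← add_div]; ring_nf
  calc (L / l₁) ^ ((n : ℝ) / p) * (L / l₂) ^ ((β - n) / p)
      ≤ ((3 / 2 : ℝ) ^ ((n : ℝ) / p) * a ^ ((n : ℝ) / p) * t ^ ((n : ℝ) / p)) *
        ((3 / 2 : ℝ) ^ ((β - n) / p) * b ^ ((β - n) / p) * t ^ ((β - n) / p)) :=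
        mul_le_mul e1 e2 (by positivity) (by positivity)
    _ = ((3 / 2 : ℝ) ^ ((n : ℝ) / p) * (3 / 2 : ℝ) ^ ((β - n) / p)) *
        (a ^ ((n : ℝ) / p) * b ^ ((β - n) / p) *
          (t ^ ((n : ℝ) / p) * t ^ ((β - n) / p))) := by ring
    _ = (3 / 2 : ℝ) ^ (β / p) *
        (a ^ ((n : ℝ) / p) * b ^ ((β - n) / p) * t ^ (β / p)) := by
        rw [← Real.rpow_add (by norm_num : (0:ℝ) < 3 / 2), ← Real.rpow_add htpos, hadd]

/-- If the `p`-weight `V` is `(p,β)`-doubling with constant `C₀`,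
then `ρ_{Ł^p(Q,V)}(e) ≤ C · B_{n/p,(β-n)/p,β/p}(Q,R) · ρ_{Ł^p(R,V)}(e)` for all cubes
`Q, R` with a constant `C` depending only on `n, p, β, C₀`; in particular, for cubes of
equal side length, `ρ_{Ł^p(Q,V)}(e) ≤ C' (1 + |x_Q - x_R|/ℓ(Q))^{β/p} ρ_{Ł^p(R,V)}(e)`. -/
theorem statement10 {n : ℕ} {X : Type*} [NormedAddCommGroup X] [NormedSpace ℝ X]
    [CompleteSpace X]
    (p β : ℝ) (hp : 0 < p) (hβ : (n : ℝ) ≤ β)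
    (V W : (Fin n → ℝ) → X →L[ℝ] X) (hVW : IsWeight V W) (hpw : IsPWeight V p)
    (C₀ : ℝ≥0)
    (hdb : ∀ (c : Fin n → ℝ) (l : ℝ) (c' : Fin n → ℝ) (l' : ℝ), 0 < l → 0 < l' →
      cube c l ⊆ cube c' l' → ∀ e : X,
      rho V (cube c' l') p e ≤
        (C₀ : ℝ≥0∞) * ENNReal.ofReal ((l' / l) ^ ((β - n) / p)) * rho V (cube c l) p e) :
    ∃ C C' : ℝ≥0,
      (∀ (c₁ : Fin n → ℝ) (l₁ : ℝ) (c₂ : Fin n → ℝ) (l₂ : ℝ), 0 < l₁ → 0 < l₂ →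
        ∀ e : X,
        rho V (cube c₁ l₁) p e ≤
          (C : ℝ≥0∞) * ENNReal.ofReal (Bfac (n / p) ((β - n) / p) (β / p) c₁ l₁ c₂ l₂) *
            rho V (cube c₂ l₂) p e) ∧
      (∀ (c₁ c₂ : Fin n → ℝ) (l : ℝ), 0 < l → ∀ e : X,
        rho V (cube c₁ l) p e ≤
          (C' : ℝ≥0∞) *
              ENNReal.ofReal ((1 + dist (center c₁ l) (center c₂ l) / l) ^ (β / p)) *
            rho V (cube c₂ l) p e) := by
  have hn0 : (0 : ℝ) ≤ n := Nat.cast_nonneg n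
  have hβ0 : (0 : ℝ) ≤ β := le_trans hn0 hβ
  have hco : ((C₀ * ((3 / 2 : ℝ) ^ (β / p)).toNNReal : ℝ≥0) : ℝ≥0∞)
      = (C₀ : ℝ≥0∞) * ENNReal.ofReal ((3 / 2 : ℝ) ^ (β / p)) := by
    rw [ENNReal.coe_mul]; rfl
  have main : ∀ (c₁ : Fin n → ℝ) (l₁ : ℝ) (c₂ : Fin n → ℝ) (l₂ : ℝ), 0 < l₁ → 0 < l₂ →
      ∀ e : X,
      rho V (cube c₁ l₁) p e ≤
        ((C₀ * ((3 / 2 : ℝ) ^ (β / p)).toNNReal : ℝ≥0) : ℝ≥0∞) *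
            ENNReal.ofReal (Bfac ((n : ℝ) / p) ((β - n) / p) (β / p) c₁ l₁ c₂ l₂) *
          rho V (cube c₂ l₂) p e := by
    intro c₁ l₁ c₂ l₂ h₁ h₂ e
    set m : Fin n → ℝ := fun i => min (c₁ i) (c₂ i) with hm
    set L : ℝ := max l₁ l₂ + dist c₁ c₂ with hLdef
    have hLpos : 0 < L := by
      have h0 : 0 ≤ dist c₁ c₂ := dist_nonneg
      have h1 : l₁ ≤ max l₁ l₂ := le_max_left _ _
      rw [hLdef]; linarith
    have hsub₁ : cube c₁ l₁ ⊆ cube m L := cube_subset_aux h₁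
    have hsub₂ : cube c₂ l₂ ⊆ cube m L := by
      have h := cube_subset_aux (c₁ := c₂) (c₂ := c₁) (l₂ := l₁) h₂
      have hfun : (fun i => min (c₂ i) (c₁ i)) = m := by
        funext i; exact min_comm _ _
      rw [hfun, max_comm, dist_comm] at h
      exact h
    have h1 := rho_le_of_subset V p hp h₁ hLpos hsub₁ e
    have h2 := hdb c₂ l₂ m L h₂ hLpos hsub₂ e
    have hkey := key_real p β hp hβ c₁ c₂ l₁ l₂ h₁ h₂
    have hfac : (C₀ : ℝ≥0∞) *
        (ENNReal.ofReal ((L / l₁) ^ ((n : ℝ) / p)) *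
          ENNReal.ofReal ((L / l₂) ^ ((β - n) / p))) ≤
        ((C₀ * ((3 / 2 : ℝ) ^ (β / p)).toNNReal : ℝ≥0) : ℝ≥0∞) *
          ENNReal.ofReal (Bfac ((n : ℝ) / p) ((β - n) / p) (β / p) c₁ l₁ c₂ l₂) := by
      rw [hco, mul_assoc]
      refine mul_le_mul_right ?_ _
      rw [← ENNReal.ofReal_mul (by positivity), ← ENNReal.ofReal_mul (by positivity)]
      exact ENNReal.ofReal_le_ofReal hkey
    calc rho V (cube c₁ l₁) p e
        ≤ ENNReal.ofReal ((L / l₁) ^ ((n : ℝ) / p)) * rho V (cube m L) p e := h1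
      _ ≤ ENNReal.ofReal ((L / l₁) ^ ((n : ℝ) / p)) *
            ((C₀ : ℝ≥0∞) * ENNReal.ofReal ((L / l₂) ^ ((β - n) / p)) *
              rho V (cube c₂ l₂) p e) := mul_le_mul_right h2 _
      _ = (C₀ : ℝ≥0∞) *
            (ENNReal.ofReal ((L / l₁) ^ ((n : ℝ) / p)) *
              ENNReal.ofReal ((L / l₂) ^ ((β - n) / p))) *
            rho V (cube c₂ l₂) p e := by ring
      _ ≤ _ := mul_le_mul_left hfac _
  refine ⟨_, C₀ * ((3 / 2 : ℝ) ^ (β / p)).toNNReal * ((2 : ℝ) ^ (β / p)).toNNReal,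
    main, ?_⟩
  intro c₁ c₂ l hl e
  refine le_trans (main c₁ l c₂ l hl hl e) (mul_le_mul_left ?_ _)
  have hadd : (n : ℝ) / p + (β - n) / p = β / p := by
    rw [← add_div]; ring_nf
  have hB : Bfac ((n : ℝ) / p) ((β - n) / p) (β / p) c₁ l c₂ l
      = (2 : ℝ) ^ (β / p) * (1 + dist (center c₁ l) (center c₂ l) / l) ^ (β / p) := by
    have h11 : (1 : ℝ) + 1 = 2 := by norm_num
    simp only [Bfac, div_self hl.ne', max_self, h11]
    rw [show (2 : ℝ) ^ (β / p) = 2 ^ ((n : ℝ) / p) * 2 ^ ((β - n) / p) from by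
      rw [← Real.rpow_add (by norm_num : (0:ℝ) < 2), hadd]]
  have h2co : ((((2 : ℝ) ^ (β / p)).toNNReal : ℝ≥0) : ℝ≥0∞)
      = ENNReal.ofReal ((2 : ℝ) ^ (β / p)) := rfl
  rw [hB, ENNReal.ofReal_mul (by positivity)]
  simp only [ENNReal.coe_mul]
  rw [h2co]
  exact le_of_eq (by ring)

end OpWeight

end
end

section
/- Let p ∈ [1,∞) with conjugate exponent p', X a Banach space, V a weight on ℝⁿ with values in 𝓛(X), and a,b : ℝⁿ → ℂ measurable. Suppose that for every e ∈ X the function x ↦ a(x)V(x)e is strongly measurable and belongs to L^p(ℝⁿ;X), and for every e* ∈ X* the function x ↦ b(x)·(e*∘V(x)⁻¹) is strongly measurable and belongs to L^{p'}(ℝⁿ;X*). Let N ∈ [0,∞) be such that for every e ∈ X, ‖a(·)V(·)e‖_{L^p(ℝⁿ;X)} ≤ N · sup{ |⟨e*,e⟩| / ‖b(·)(e*∘V(·)⁻¹)‖_{L^{p'}(ℝⁿ;X*)} : e* ∈ X*, e* ≠ 0 }. Then for every strongly measurable f : ℝⁿ → X such that Vf ∈ L^p(ℝⁿ;X) and bf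 is Bochner integrable, the function Pf(x) := a(x)·∫_{ℝⁿ} b(y)f(y) dy satisfies ‖V·Pf‖_{L^p(ℝⁿ;X)} ≤ N·‖Vf‖_{L^p(ℝⁿ;X)}. -/
open MeasureTheory ENNReal NNReal

/-- Let `p ∈ [1,∞)` with conjugate `p'`, `X` a (complex) Banach space,
`V` an `𝓛(X)`-valued weight on `ℝⁿ` (with a.e. inverse `W`), and `a, b : ℝⁿ → ℂ`
measurable with `a V e ∈ L^p(ℝⁿ;X)` for each `e` and `b (e' ∘ V⁻¹) ∈ L^{p'}(ℝⁿ;X*)` for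
each `e'`.  If `N ∈ [0,∞)` satisfies
`‖a V e‖_{L^p} ≤ N sup_{e' ≠ 0} |⟨e',e⟩| / ‖b (e' ∘ V⁻¹)‖_{L^{p'}}` for all `e ∈ X`,
then for every strongly measurable `f` with `V f ∈ L^p` and `b f` Bochner integrable,
the function `P f (x) = a x • ∫ b y • f y dy` satisfies
`‖V ⬝ P f‖_{L^p} ≤ N ‖V f‖_{L^p}`. -/
theorem statement12 {n : ℕ} {X : Type*} [NormedAddCommGroup X] [NormedSpace ℂ X]
    [CompleteSpace X]
    (p p' : ℝ≥0∞) (hp1 : 1 ≤ p) (hpt : p ≠ ⊤) (hpc : 1 / p + 1 / p' = 1)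
    (V W : (Fin n → ℝ) → X →L[ℂ] X)
    (hVmeas : ∀ e : X, StronglyMeasurable fun x => V x e)
    (hinv : ∀ᵐ x ∂(volume : Measure (Fin n → ℝ)),
      (V x).comp (W x) = ContinuousLinearMap.id ℂ X ∧
        (W x).comp (V x) = ContinuousLinearMap.id ℂ X)
    (hWmeas : ∀ e : X, AEStronglyMeasurable (fun x => W x e) (volume : Measure (Fin n → ℝ)))
    (a b : (Fin n → ℝ) → ℂ) (ha : Measurable a) (hb : Measurable b)
    (haV : ∀ e : X, StronglyMeasurable (fun x => a x • V x e) ∧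
      MemLp (fun x => a x • V x e) p volume)
    (hbW : ∀ e' : X →L[ℂ] ℂ, StronglyMeasurable (fun x => b x • e'.comp (W x)) ∧
      MemLp (fun x => b x • e'.comp (W x)) p' volume)
    (N : ℝ≥0)
    (hN : ∀ e : X, eLpNorm (fun x => a x • V x e) p volume ≤
      (N : ℝ≥0∞) * ⨆ (e' : X →L[ℂ] ℂ) (_ : e' ≠ 0),
        (‖e' e‖₊ : ℝ≥0∞) / eLpNorm (fun x => b x • e'.comp (W x)) p' volume)
    (f : (Fin n → ℝ) → X) (hf : StronglyMeasurable f)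
    (hVf : MemLp (fun x => V x (f x)) p volume)
    (hbf : Integrable (fun x => b x • f x) volume) :
    eLpNorm (fun x => a x • V x (∫ y, b y • f y ∂volume)) p volume ≤
      (N : ℝ≥0∞) * eLpNorm (fun x => V x (f x)) p volume := by
  set e : X := ∫ y, b y • f y ∂volume with he
  refine (hN e).trans (mul_le_mul_right ?_ _)
  refine iSup_le fun e' => iSup_le fun _ => ?_
  refine ENNReal.div_le_of_le_mul ?_
  -- key: ‖e' e‖ ≤ ‖Vf‖_p * ‖b • e'∘W‖_{p'}
  have key : (‖e' e‖₊ : ℝ≥0∞) ≤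
      eLpNorm (fun x => b x • e'.comp (W x)) p' volume *
        eLpNorm (fun x => V x (f x)) p volume := by
    have h1 : e' e = ∫ y, b y • e' (f y) ∂volume := by
      rw [he, ← ContinuousLinearMap.integral_comp_comm e' hbf]
      simp
    have h2 : (‖e' e‖₊ : ℝ≥0∞) ≤ ∫⁻ y, ‖b y • e' (f y)‖₊ ∂volume := by
      rw [h1]; exact enorm_integral_le_lintegral_enorm _
    have h3 : (fun y => b y • e' (f y)) =ᵐ[volume]
        fun y => (b y • e'.comp (W y)) (V y (f y)) := by
      filter_upwards [hinv] with y hy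
      have : W y (V y (f y)) = f y := by
        have := congrArg (fun T => T (f y)) hy.2
        simpa using this
      simp [this]
    have h4 : (‖e' e‖₊ : ℝ≥0∞) ≤
        eLpNorm (fun y => (b y • e'.comp (W y)) (V y (f y))) 1 volume := by
      rw [eLpNorm_one_eq_lintegral_enorm]
      exact h2.trans_eq (lintegral_congr_ae (h3.mono fun y hy => by dsimp only at hy ⊢; rw [hy]; rfl))
    refine h4.trans ?_
    refine eLpNorm_le_eLpNorm_mul_eLpNorm_of_nnnorm (p := p') (q := p) (hbW e').1.aestronglyMeasurable hVf.1
      (fun (T : X →L[ℂ] ℂ) (v : X) => T v) 1 ?_ (hpqr := ?_) |>.trans (by simp)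
    · exact Filter.Eventually.of_forall fun y => by simpa using (b y • e'.comp (W y)).le_opNNNorm _
    · rw [add_comm] at hpc; exact ⟨by simpa [one_div] using hpc⟩
  calc (‖e' e‖₊ : ℝ≥0∞)
      ≤ eLpNorm (fun x => b x • e'.comp (W x)) p' volume *
        eLpNorm (fun x => V x (f x)) p volume := key
    _ = eLpNorm (fun x => V x (f x)) p volume *
        eLpNorm (fun x => b x • e'.comp (W x)) p' volume := mul_comm _ _
end

section
/- Let p ∈ (1,∞) with conjugate p', let X₁,X₂ be Banach spaces, and let X := X₁ ⊕₁ X₂ be their direct sum with norm ‖(u,v)‖_X := ‖u‖_{X₁}+‖v‖_{X₂}. Let Q ⊂ ℝⁿ be a cube and B : ℝⁿ → 𝓛(X₁,X₂) be such that for every u ∈ X₁ the map x ↦ B(x)u is strongly measurable with ∫_Q ‖B(x)u‖_{X₂}^p dx < ∞, and for every w* ∈ X₂* the map x ↦ w*∘B(x) ∈ X₁* is strongly measurable with ∫_Q ‖w*∘B(x)‖_{X₁*}^{p'} dx < ∞. Define V(x) ∈ 𝓛(X) by V(x)(u,v) := (u, B(x)u+v); each V(x) is invertible with V(x)⁻¹(u,v)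 = (u, v−B(x)u). Then for every e* ∈ X*: (⨍_Q ‖e*∘V(x)⁻¹‖_{X*}^{p'} dx)^{1/p'} ≤ (1 + Osc_p(B,Q) + Osc_{p'}(B*,Q)) · sup{ |⟨e*,e⟩| / (⨍_Q ‖V(x)e‖_X^p dx)^{1/p} : e ∈ X, e ≠ 0 }, where Osc_p(B,Q) := sup_{‖u‖_{X₁}≤1} (⨍_Q ‖B(x)u − ⨍_Q B(y)u dy‖_{X₂}^p dx)^{1/p} and Osc_{p'}(B*,Q) := sup_{‖w*‖_{X₂*}≤1} (⨍_Q ‖w*∘B(x) − ⨍_Q (w*∘B(y)) dy‖_{X₁*}^{p'} dx)^{1/p'}, the inner averages being Bochner integrals over Q. -/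
open MeasureTheory ENNReal NNReal

noncomputable section

namespace OpWeight15

instance : Fact ((1 : ℝ≥0∞) ≤ 1) := ⟨le_rfl⟩

/-- The axis-parallel cube in `ℝⁿ` with lower corner `c` and side length `l`. -/
def cube {n : ℕ} (c : Fin n → ℝ) (l : ℝ) : Set (Fin n → ℝ) :=
  {y | ∀ i, y i ∈ Set.Ico (c i) (c i + l)}

/-- The element `(u, v)` of the direct sum `X₁ ⊕₁ X₂` (with the sum norm). -/
def mk {X₁ X₂ : Type*} [NormedAddCommGroup X₁] [NormedAddCommGroup X₂]
    (u : X₁) (v : X₂) : WithLp 1 (X₁ × X₂) :=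
  (WithLp.equiv 1 (X₁ × X₂)).symm (u, v)

/-! ### Auxiliary lemmas -/

section Aux

variable {α : Type*} [MeasurableSpace α]

/-- `(∫⁻ C^q dν)^(1/q) = C` for a probability measure. -/
lemma lintegral_const_rpow {ν : Measure α} [IsProbabilityMeasure ν] {q : ℝ} (hq : 0 < q)
    (C : ℝ≥0∞) : (∫⁻ _, C ^ q ∂ν) ^ (1 / q) = C := by
  rw [lintegral_const, measure_univ, mul_one, ← ENNReal.rpow_mul,
    mul_one_div_cancel hq.ne', ENNReal.rpow_one]

/-- Minkowski for a constant plus a function over a probability measure. -/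
lemma lintegral_const_add_rpow_le {ν : Measure α} [IsProbabilityMeasure ν] {q : ℝ}
    (hq : 1 ≤ q) {C : ℝ≥0∞} {g : α → ℝ≥0∞} (hg : AEMeasurable g ν) :
    (∫⁻ x, (C + g x) ^ q ∂ν) ^ (1 / q) ≤ C + (∫⁻ x, g x ^ q ∂ν) ^ (1 / q) := by
  have h := ENNReal.lintegral_Lp_add_le (f := fun _ => C) (g := g) (μ := ν)
    aemeasurable_const hg hq
  simp only [Pi.add_apply] at h
  calc (∫⁻ x, (C + g x) ^ q ∂ν) ^ (1 / q)
      ≤ (∫⁻ _, C ^ q ∂ν) ^ (1 / q) + (∫⁻ x, g x ^ q ∂ν) ^ (1 / q) := h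
    _ = C + (∫⁻ x, g x ^ q ∂ν) ^ (1 / q) := by
        rw [lintegral_const_rpow (lt_of_lt_of_le zero_lt_one hq)]

/-- Pulling a constant out of an `L^q` norm. -/
lemma lintegral_const_mul_rpow {ν : Measure α} {q : ℝ} (hq : 0 < q) (r : ℝ≥0)
    {g : α → ℝ≥0∞} (hg : Measurable g) :
    (∫⁻ x, ((r : ℝ≥0∞) * g x) ^ q ∂ν) ^ (1 / q)
      = (r : ℝ≥0∞) * (∫⁻ x, g x ^ q ∂ν) ^ (1 / q) := by
  have h1 : ∀ x, ((r : ℝ≥0∞) * g x) ^ q = (r : ℝ≥0∞) ^ q * g x ^ q := fun x =>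
    ENNReal.mul_rpow_of_nonneg _ _ hq.le
  simp_rw [h1]
  rw [lintegral_const_mul _ (hg.pow_const q),
    ENNReal.mul_rpow_of_nonneg _ _ (by positivity : (0:ℝ) ≤ 1 / q),
    ← ENNReal.rpow_mul, mul_one_div_cancel hq.ne', ENNReal.rpow_one]

end Aux

set_option maxHeartbeats 2000000 in
/-- Let `X = X₁ ⊕₁ X₂` with norm `‖(u,v)‖ = ‖u‖ + ‖v‖`, let `Q` be a
cube in `ℝⁿ`, and let `B : ℝⁿ → 𝓛(X₁,X₂)` be strong-operator measurable with
`∫_Q ‖B x u‖^p dx < ∞` and `∫_Q ‖w' ∘ B x‖^{p'} dx < ∞` for all `u`, `w'`.  Let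
`V x (u,v) = (u, B x u + v)`, with inverse `V x ⁻¹ (u,v) = (u, v - B x u)`.  Then for
every `e* ∈ X*`:
`(⨍_Q ‖e* ∘ V(x)⁻¹‖^{p'})^{1/p'} ≤ (1 + Osc_p(B,Q) + Osc_{p'}(B*,Q)) ·
  sup_{e ≠ 0} |⟨e*,e⟩| / (⨍_Q ‖V x e‖^p)^{1/p}`. -/
theorem statement15 {n : ℕ} {X₁ X₂ : Type*}
    [NormedAddCommGroup X₁] [NormedSpace ℝ X₁] [CompleteSpace X₁]
    [NormedAddCommGroup X₂] [NormedSpace ℝ X₂] [CompleteSpace X₂]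
    (p p' : ℝ) (hp : 1 < p) (hpc : 1 / p + 1 / p' = 1)
    (c : Fin n → ℝ) (l : ℝ) (hl : 0 < l)
    (B : (Fin n → ℝ) → X₁ →L[ℝ] X₂)
    (hBmeas : ∀ u : X₁, StronglyMeasurable fun x => B x u)
    (hBp : ∀ u : X₁, (∫⁻ x in cube c l, (‖B x u‖₊ : ℝ≥0∞) ^ p ∂volume) ≠ ⊤)
    (hB'meas : ∀ w' : X₂ →L[ℝ] ℝ, StronglyMeasurable fun x => w'.comp (B x))
    (hB'p : ∀ w' : X₂ →L[ℝ] ℝ,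
      (∫⁻ x in cube c l, (‖w'.comp (B x)‖₊ : ℝ≥0∞) ^ p' ∂volume) ≠ ⊤)
    (V Vinv : (Fin n → ℝ) → WithLp 1 (X₁ × X₂) →L[ℝ] WithLp 1 (X₁ × X₂))
    (hV : ∀ (x : Fin n → ℝ) (u : X₁) (v : X₂), V x (mk u v) = mk u (B x u + v))
    (hVinv : ∀ (x : Fin n → ℝ) (u : X₁) (v : X₂), Vinv x (mk u v) = mk u (v - B x u))
    (e' : WithLp 1 (X₁ × X₂) →L[ℝ] ℝ) :
    (⨍⁻ x in cube c l, (‖e'.comp (Vinv x)‖₊ : ℝ≥0∞) ^ p' ∂volume) ^ (1 / p') ≤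
      (1 +
          (⨆ (u : X₁) (_ : ‖u‖ ≤ 1),
            (⨍⁻ x in cube c l,
              (‖B x u - (⨍ y in cube c l, B y u ∂volume)‖₊ : ℝ≥0∞) ^ p ∂volume) ^ (1 / p)) +
          (⨆ (w' : X₂ →L[ℝ] ℝ) (_ : ‖w'‖ ≤ 1),
            (⨍⁻ x in cube c l,
              (‖w'.comp (B x) - (⨍ y in cube c l, w'.comp (B y) ∂volume)‖₊ : ℝ≥0∞) ^ p'
                ∂volume) ^ (1 / p'))) *
        ⨆ (e : WithLp 1 (X₁ × X₂)) (_ : e ≠ 0),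
          (‖e' e‖₊ : ℝ≥0∞) /
            (⨍⁻ x in cube c l, (‖V x e‖₊ : ℝ≥0∞) ^ p ∂volume) ^ (1 / p) := by
  -- exponent facts
  have hp0 : (0:ℝ) < p := lt_trans zero_lt_one hp
  have h1p : 1 / p < 1 := by rw [div_lt_one hp0]; exact hp
  have h1p0 : 0 < 1 / p := by positivity
  have hp'inv : 1 / p' = 1 - 1 / p := by linarith
  have hp'inv0 : 0 < 1 / p' := by rw [hp'inv]; linarith
  have hp'0 : (0:ℝ) < p' := by
    rcases lt_trichotomy p' 0 with h | h | h
    · exfalso; have : 1 / p' < 0 := div_neg_of_pos_of_neg zero_lt_one h; linarith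
    · exfalso; rw [h] at hp'inv0; simp at hp'inv0
    · exact h
  have hp' : 1 < p' := by
    have : 1 / p' < 1 := by rw [hp'inv]; linarith
    rw [div_lt_one hp'0] at this; exact this
  -- the cube and its measure
  set Q : Set (Fin n → ℝ) := cube c l with hQ
  have hQpi : Q = Set.univ.pi (fun i => Set.Ico (c i) (c i + l)) := by
    ext y; simp [hQ, cube, Set.mem_pi]
  have hQvol : volume Q = ENNReal.ofReal l ^ n := by
    rw [hQpi, volume_pi_pi]; simp
  have hQ0 : volume Q ≠ 0 := by
    rw [hQvol]
    exact pow_ne_zero _ (by simpa using hl)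
  have hQT : volume Q ≠ ⊤ := by
    rw [hQvol]
    exact pow_ne_top ofReal_ne_top
  haveI : Fact (volume Q < ⊤) := ⟨lt_top_iff_ne_top.mpr hQT⟩
  set μ : Measure (Fin n → ℝ) := volume.restrict Q with hμdef
  set ν : Measure (Fin n → ℝ) := (volume Q)⁻¹ • μ with hνdef
  haveI : IsProbabilityMeasure ν := by
    constructor
    rw [hνdef, Measure.smul_apply, smul_eq_mul, hμdef, Measure.restrict_apply_univ]
    exact ENNReal.inv_mul_cancel hQ0 hQT
  have hlav : ∀ f : (Fin n → ℝ) → ℝ≥0∞, (⨍⁻ x in Q, f x ∂volume) = ∫⁻ x, f x ∂ν := by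
    intro f
    rw [hνdef, hμdef]
    simp only [laverage_eq', Measure.restrict_apply_univ]
  have havB : ∀ f : (Fin n → ℝ) → X₂,
      (⨍ y in Q, f y ∂volume) = ∫ y, f y ∂ν := by
    intro f
    rw [hνdef, hμdef]
    exact setAverage_eq' volume f Q
  have havD : ∀ f : (Fin n → ℝ) → (X₁ →L[ℝ] ℝ),
      (⨍ y in Q, f y ∂volume) = ∫ y, f y ∂ν := by
    intro f
    rw [hνdef, hμdef]
    exact setAverage_eq' volume f Q
  -- integrability
  have hmem1 : ∀ u : X₁, Integrable (fun y => B y u) μ := by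
    intro u
    have hmem : MemLp (fun y => B y u) (ENNReal.ofReal p) μ := by
      refine ⟨(hBmeas u).aestronglyMeasurable, ?_⟩
      rw [eLpNorm_eq_lintegral_rpow_enorm_toReal (by simp [hp0]) ofReal_ne_top,
        ENNReal.toReal_ofReal hp0.le]
      exact ENNReal.rpow_lt_top_of_nonneg (by positivity) (hBp u)
    exact hmem.integrable (by exact_mod_cast ENNReal.one_le_ofReal.mpr hp.le)
  have hmem2 : ∀ w' : X₂ →L[ℝ] ℝ, Integrable (fun y => w'.comp (B y)) μ := by
    intro w'
    have hmem : MemLp (fun y => w'.comp (B y)) (ENNReal.ofReal p') μ := by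
      refine ⟨(hB'meas w').aestronglyMeasurable, ?_⟩
      rw [eLpNorm_eq_lintegral_rpow_enorm_toReal (by simp [hp'0]) ofReal_ne_top,
        ENNReal.toReal_ofReal hp'0.le]
      exact ENNReal.rpow_lt_top_of_nonneg (by positivity) (hB'p w')
    exact hmem.integrable (by exact_mod_cast ENNReal.one_le_ofReal.mpr hp'.le)
  have hIntν1 : ∀ u : X₁, Integrable (fun y => B y u) ν := fun u =>
    (hmem1 u).smul_measure (ENNReal.inv_ne_top.mpr hQ0)
  have hIntν2 : ∀ w' : X₂ →L[ℝ] ℝ, Integrable (fun y => w'.comp (B y)) ν := fun w' =>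
    Integrable.smul_measure (ε := X₁ →L[ℝ] ℝ) (hmem2 w') (ENNReal.inv_ne_top.mpr hQ0)
  -- basic facts about `mk` and the direct-sum norm
  have hmk_norm : ∀ (u : X₁) (v : X₂), ‖mk u v‖ = ‖u‖ + ‖v‖ := by
    intro u v
    rw [mk, WithLp.prod_norm_eq_add (by norm_num)]
    simp
  have hmk_nnnorm : ∀ (u : X₁) (v : X₂), (‖mk u v‖₊ : ℝ≥0∞) = (‖u‖₊ : ℝ≥0∞) + ‖v‖₊ := by
    intro u v
    rw [← ENNReal.coe_add]
    congr 1
    apply NNReal.coe_injective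
    push_cast
    exact hmk_norm u v
  have hmk_surj : ∀ e : WithLp 1 (X₁ × X₂),
      e = mk ((WithLp.equiv 1 (X₁ × X₂)) e).1 ((WithLp.equiv 1 (X₁ × X₂)) e).2 := fun e => rfl
  -- the components of `e'`
  set J := WithLp.prodContinuousLinearEquiv 1 ℝ X₁ X₂ with hJ
  set u' : X₁ →L[ℝ] ℝ :=
    e'.comp ((J.symm : X₁ × X₂ →L[ℝ] WithLp 1 (X₁ × X₂)).comp
      (ContinuousLinearMap.inl ℝ X₁ X₂)) with hu'
  set v' : X₂ →L[ℝ] ℝ :=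
    e'.comp ((J.symm : X₁ × X₂ →L[ℝ] WithLp 1 (X₁ × X₂)).comp
      (ContinuousLinearMap.inr ℝ X₁ X₂)) with hv'
  have hmkJ : ∀ (u : X₁) (v : X₂), mk u v = J.symm (u, v) := fun u v => rfl
  have hmk_zero : ∀ (u : X₁) (v : X₂), mk u v = 0 ↔ u = 0 ∧ v = 0 := by
    intro u v
    rw [hmkJ]
    rw [show (0 : WithLp 1 (X₁ × X₂)) = J.symm 0 from (map_zero J.symm).symm]
    rw [J.symm.injective.eq_iff, Prod.ext_iff]
    rfl
  have he'mk : ∀ (u : X₁) (v : X₂), e' (mk u v) = u' u + v' v := by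
    intro u v
    have h1 : mk u v = J.symm (u, 0) + J.symm (0, v) := by
      rw [← map_add]
      norm_num [hmkJ]
    rw [h1, map_add]
    rfl
  -- the average of B and of v' ∘ B
  set Bavg : X₁ → X₂ := fun u => ⨍ y in Q, B y u ∂volume with hBavg
  set c' : X₁ →L[ℝ] ℝ := ⨍ y in Q, (v'.comp (B y)) ∂volume with hc'
  have hc'app : ∀ u : X₁, c' u = v' (Bavg u) := by
    intro u
    have h1 : v' (Bavg u) = ∫ y, v' (B y u) ∂ν := by
      simp only [hBavg]
      rw [show (⨍ y in Q, B y u ∂volume) = ∫ y, B y u ∂ν from havB (fun y => B y u)]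
      exact (ContinuousLinearMap.integral_comp_comm v' (hIntν1 u)).symm
    have h2 : c' u = (∫ y, v'.comp (B y) ∂ν) u := by
      rw [hc', show (⨍ y in Q, v'.comp (B y) ∂volume) = ∫ y, v'.comp (B y) ∂ν from havD (fun y => v'.comp (B y))]
    have h3 : (∫ y, (v'.comp (B y)) u ∂ν) = (∫ y, v'.comp (B y) ∂ν) u :=
      ContinuousLinearMap.integral_comp_comm (ContinuousLinearMap.apply ℝ ℝ u) (hIntν2 v')
    rw [h1, h2, ← h3]
    simp only [ContinuousLinearMap.comp_apply]
  -- names for the three sup quantities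
  set Op : ℝ≥0∞ := ⨆ (u : X₁) (_ : ‖u‖ ≤ 1),
      (⨍⁻ x in Q, (‖B x u - (⨍ y in Q, B y u ∂volume)‖₊ : ℝ≥0∞) ^ p ∂volume) ^ (1 / p)
    with hOp
  set Op' : ℝ≥0∞ := ⨆ (w' : X₂ →L[ℝ] ℝ) (_ : ‖w'‖ ≤ 1),
      (⨍⁻ x in Q,
        (‖w'.comp (B x) - (⨍ y in Q, w'.comp (B y) ∂volume)‖₊ : ℝ≥0∞) ^ p' ∂volume) ^ (1 / p')
    with hOp'
  set S : ℝ≥0∞ := ⨆ (e : WithLp 1 (X₁ × X₂)) (_ : e ≠ 0),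
      (‖e' e‖₊ : ℝ≥0∞) / (⨍⁻ x in Q, (‖V x e‖₊ : ℝ≥0∞) ^ p ∂volume) ^ (1 / p)
    with hS
  -- trivial case : e' = 0
  by_cases he0 : e' = 0
  · have : ∀ x : Fin n → ℝ, (‖e'.comp (Vinv x)‖₊ : ℝ≥0∞) ^ p' = 0 := by
      intro x
      rw [he0, ContinuousLinearMap.zero_comp]
      simp [ENNReal.zero_rpow_of_pos hp'0]
    calc (⨍⁻ x in Q, (‖e'.comp (Vinv x)‖₊ : ℝ≥0∞) ^ p' ∂volume) ^ (1 / p')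
        = (⨍⁻ _ in Q, (0:ℝ≥0∞) ∂volume) ^ (1 / p') := by
          congr 1; exact laverage_congr (Filter.Eventually.of_forall this)
      _ = 0 := by rw [laverage_zero]; exact ENNReal.zero_rpow_of_pos hp'inv0
      _ ≤ _ := zero_le
  -- `D e` : the denominator in `S`
  have hDle : ∀ e : WithLp 1 (X₁ × X₂),
      (⨍⁻ x in Q, (‖V x e‖₊ : ℝ≥0∞) ^ p ∂volume) ^ (1 / p) ≠ ⊤ := by
    intro e
    set e₁ := ((WithLp.equiv 1 (X₁ × X₂)) e).1
    set e₂ := ((WithLp.equiv 1 (X₁ × X₂)) e).2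
    have hVx : ∀ x, (‖V x e‖₊ : ℝ≥0∞) ≤ ((‖e₁‖₊ : ℝ≥0∞) + ‖e₂‖₊) + ‖B x e₁‖₊ := by
      intro x
      have : V x e = mk e₁ (B x e₁ + e₂) := by rw [hmk_surj e, hV]
      rw [this, hmk_nnnorm]
      have : (‖B x e₁ + e₂‖₊ : ℝ≥0∞) ≤ (‖B x e₁‖₊ : ℝ≥0∞) + ‖e₂‖₊ := by
        exact_mod_cast nnnorm_add_le _ _
      calc (‖e₁‖₊ : ℝ≥0∞) + ‖B x e₁ + e₂‖₊ ≤ (‖e₁‖₊ : ℝ≥0∞) + ((‖B x e₁‖₊ : ℝ≥0∞) + ‖e₂‖₊) :=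
            add_le_add_right this _
        _ = ((‖e₁‖₊ : ℝ≥0∞) + ‖e₂‖₊) + ‖B x e₁‖₊ := by ring
    have hfin : ∫⁻ x, (‖B x e₁‖₊ : ℝ≥0∞) ^ p ∂ν ≠ ⊤ := by
      rw [hνdef, lintegral_smul_measure]
      exact ENNReal.mul_ne_top (ENNReal.inv_ne_top.mpr hQ0) (hBp e₁)
    have hmeas : Measurable fun x => (‖B x e₁‖₊ : ℝ≥0∞) := (hBmeas e₁).enorm
    intro htop
    have hle : (⨍⁻ x in Q, (‖V x e‖₊ : ℝ≥0∞) ^ p ∂volume) ^ (1 / p)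
        ≤ ((‖e₁‖₊ : ℝ≥0∞) + ‖e₂‖₊) + (∫⁻ x, (‖B x e₁‖₊ : ℝ≥0∞) ^ p ∂ν) ^ (1 / p) := by
      rw [hlav]
      calc (∫⁻ x, (‖V x e‖₊ : ℝ≥0∞) ^ p ∂ν) ^ (1 / p)
          ≤ (∫⁻ x, (((‖e₁‖₊ : ℝ≥0∞) + ‖e₂‖₊) + (‖B x e₁‖₊ : ℝ≥0∞)) ^ p ∂ν) ^ (1 / p) := by
            apply ENNReal.rpow_le_rpow _ h1p0.le
            exact lintegral_mono fun x => ENNReal.rpow_le_rpow (hVx x) hp0.le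
        _ ≤ _ := lintegral_const_add_rpow_le hp.le hmeas.aemeasurable
    rw [htop] at hle
    have h2 : (∫⁻ x, (‖B x e₁‖₊ : ℝ≥0∞) ^ p ∂ν) ^ (1 / p) ≠ ⊤ :=
      (ENNReal.rpow_lt_top_of_nonneg h1p0.le hfin).ne
    exact (ENNReal.add_ne_top.mpr ⟨by simp, h2⟩) (top_le_iff.mp hle)
  -- S is nonzero since e' ≠ 0
  have hS0 : S ≠ 0 := by
    obtain ⟨e₀, he₀⟩ : ∃ e₀, e' e₀ ≠ 0 := by
      by_contra h
      push_neg at h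
      exact he0 (ContinuousLinearMap.ext fun e => by rw [h e]; rfl)
    have he₀0 : e₀ ≠ 0 := fun h => he₀ (by rw [h, map_zero])
    have : (0:ℝ≥0∞) < (‖e' e₀‖₊ : ℝ≥0∞) /
        (⨍⁻ x in Q, (‖V x e₀‖₊ : ℝ≥0∞) ^ p ∂volume) ^ (1 / p) :=
      ENNReal.div_pos (by simpa using he₀) (hDle e₀)
    intro h
    have hle : (‖e' e₀‖₊ : ℝ≥0∞) /
        (⨍⁻ x in Q, (‖V x e₀‖₊ : ℝ≥0∞) ^ p ∂volume) ^ (1 / p) ≤ S := by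
      rw [hS]
      exact le_iSup₂ (f := fun (e : WithLp 1 (X₁ × X₂)) (_ : e ≠ 0) =>
        (‖e' e‖₊ : ℝ≥0∞) / (⨍⁻ x in Q, (‖V x e‖₊ : ℝ≥0∞) ^ p ∂volume) ^ (1 / p)) e₀ he₀0
    rw [h] at hle
    exact absurd (le_antisymm hle (zero_le)) this.ne'
  -- Step D : ‖v'‖ ≤ S
  have hbS : (‖v'‖₊ : ℝ≥0∞) ≤ S := by
    apply ENNReal.le_of_forall_nnreal_lt
    intro r hr
    have hr' : (r : ℝ) < ‖v'‖ := by exact_mod_cast hr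
    obtain ⟨v, hv⟩ : ∃ v : X₂, (r : ℝ) * ‖v‖ < ‖v' v‖ := by
      by_contra h
      push_neg at h
      exact absurd (v'.opNorm_le_bound r.coe_nonneg fun v => h v) (not_le.mpr hr')
    have hv0 : v ≠ 0 := by
      intro h
      rw [h] at hv
      simp at hv
    have hvn : (0:ℝ) < ‖v‖ := norm_pos_iff.mpr hv0
    set e : WithLp 1 (X₁ × X₂) := mk 0 v with he
    have he0' : e ≠ 0 := fun h => hv0 ((hmk_zero 0 v).mp h).2
    have hVe : ∀ x, (‖V x e‖₊ : ℝ≥0∞) = (‖v‖₊ : ℝ≥0∞) := by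
      intro x
      rw [he, hV, map_zero, zero_add, hmk_nnnorm]
      simp
    have hD : (⨍⁻ x in Q, (‖V x e‖₊ : ℝ≥0∞) ^ p ∂volume) ^ (1 / p) = (‖v‖₊ : ℝ≥0∞) := by
      rw [hlav]
      simp_rw [hVe]
      exact lintegral_const_rpow hp0 _
    have he'e : e' e = v' v := by rw [he, he'mk, map_zero, zero_add]
    have hF : (r : ℝ≥0∞) ≤ (‖e' e‖₊ : ℝ≥0∞) /
        (⨍⁻ x in Q, (‖V x e‖₊ : ℝ≥0∞) ^ p ∂volume) ^ (1 / p) := by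
      rw [hD, he'e, ENNReal.le_div_iff_mul_le (Or.inl (by simpa using hv0))
        (Or.inl ENNReal.coe_ne_top)]
      rw [← ENNReal.coe_mul]
      apply ENNReal.coe_le_coe.mpr
      rw [← NNReal.coe_le_coe]
      push_cast
      calc (r : ℝ) * ‖v‖ ≤ ‖v' v‖ := hv.le
        _ = |v' v| := by rw [Real.norm_eq_abs]
        _ ≤ ‖v' v‖ := le_of_eq (Real.norm_eq_abs _).symm
    refine hF.trans ?_
    rw [hS]
    exact le_iSup₂ (f := fun (e : WithLp 1 (X₁ × X₂)) (_ : e ≠ 0) =>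
      (‖e' e‖₊ : ℝ≥0∞) / (⨍⁻ x in Q, (‖V x e‖₊ : ℝ≥0∞) ^ p ∂volume) ^ (1 / p)) e he0'
  -- Step C : the oscillation bound for v'
  have hOscC : (∫⁻ x, (‖v'.comp (B x) - c'‖₊ : ℝ≥0∞) ^ p' ∂ν) ^ (1 / p')
      ≤ Op' * (‖v'‖₊ : ℝ≥0∞) := by
    by_cases hv'0 : v' = 0
    · have : ∀ x, (‖v'.comp (B x) - c'‖₊ : ℝ≥0∞) = 0 := by
        intro x
        have hc0 : c' = 0 := by
          rw [hc', hv'0]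
          simp only [ContinuousLinearMap.zero_comp]
          simp
        rw [hv'0, hc0]
        simp
      simp_rw [this]
      rw [ENNReal.zero_rpow_of_pos hp'0, lintegral_zero, ENNReal.zero_rpow_of_pos hp'inv0]
      exact zero_le
    have hn0 : ‖v'‖₊ ≠ 0 := by simpa using hv'0
    set w' : X₂ →L[ℝ] ℝ := ‖v'‖⁻¹ • v' with hw'
    have hvn0 : ‖v'‖ ≠ 0 := norm_ne_zero_iff.mpr hv'0
    have hw'norm : ‖w'‖ ≤ 1 := by
      have : ‖w'‖ = 1 := by
        rw [hw']
        rw [norm_smul ‖v'‖⁻¹ v', norm_inv, norm_norm, inv_mul_cancel₀ hvn0]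
      rw [this]
    have hwB : ∀ x, w'.comp (B x) = ‖v'‖⁻¹ • (v'.comp (B x)) := by
      intro x
      rw [hw', ContinuousLinearMap.smul_comp]
    have hwavg : (⨍ y in Q, w'.comp (B y) ∂volume) = ‖v'‖⁻¹ • c' := by
      rw [hc', show (⨍ y in Q, w'.comp (B y) ∂volume) = ∫ y, w'.comp (B y) ∂ν from havD (fun y => w'.comp (B y)),
        show (⨍ y in Q, v'.comp (B y) ∂volume) = ∫ y, v'.comp (B y) ∂ν from havD (fun y => v'.comp (B y))]
      simp_rw [hwB]
      exact integral_smul _ _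
    have hint : ∀ x, (‖w'.comp (B x) - (⨍ y in Q, w'.comp (B y) ∂volume)‖₊ : ℝ≥0∞)
        = ((‖v'‖₊⁻¹ : ℝ≥0) : ℝ≥0∞) * (‖v'.comp (B x) - c'‖₊ : ℝ≥0∞) := by
      intro x
      rw [hwavg, hwB x, ← smul_sub ‖v'‖⁻¹ (v'.comp (B x)) c', ← ENNReal.coe_mul]
      congr 1
      rw [nnnorm_smul, nnnorm_inv, nnnorm_norm]
    have hkey : Op' ≥ ((‖v'‖₊⁻¹ : ℝ≥0) : ℝ≥0∞) *
        (∫⁻ x, (‖v'.comp (B x) - c'‖₊ : ℝ≥0∞) ^ p' ∂ν) ^ (1 / p') := by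
      have h1 : (⨍⁻ x in Q,
          (‖w'.comp (B x) - (⨍ y in Q, w'.comp (B y) ∂volume)‖₊ : ℝ≥0∞) ^ p' ∂volume) ^ (1 / p')
          = ((‖v'‖₊⁻¹ : ℝ≥0) : ℝ≥0∞) *
            (∫⁻ x, (‖v'.comp (B x) - c'‖₊ : ℝ≥0∞) ^ p' ∂ν) ^ (1 / p') := by
        rw [hlav]
        simp_rw [hint]
        exact lintegral_const_mul_rpow hp'0 _
          ((hB'meas v').sub stronglyMeasurable_const).enorm
      rw [← h1, hOp']
      exact le_iSup₂ (f := fun (w' : X₂ →L[ℝ] ℝ) (_ : ‖w'‖ ≤ 1) =>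
        (⨍⁻ x in Q,
          (‖w'.comp (B x) - (⨍ y in Q, w'.comp (B y) ∂volume)‖₊ : ℝ≥0∞) ^ p' ∂volume) ^ (1 / p'))
        w' hw'norm
    calc (∫⁻ x, (‖v'.comp (B x) - c'‖₊ : ℝ≥0∞) ^ p' ∂ν) ^ (1 / p')
        = (‖v'‖₊ : ℝ≥0∞) * (((‖v'‖₊⁻¹ : ℝ≥0) : ℝ≥0∞) *
            (∫⁻ x, (‖v'.comp (B x) - c'‖₊ : ℝ≥0∞) ^ p' ∂ν) ^ (1 / p')) := by
          rw [← mul_assoc, ← ENNReal.coe_mul, mul_inv_cancel₀ hn0, ENNReal.coe_one, one_mul]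
      _ ≤ (‖v'‖₊ : ℝ≥0∞) * Op' := by
          exact mul_le_mul_right hkey _
      _ = Op' * (‖v'‖₊ : ℝ≥0∞) := mul_comm _ _
  -- Step E : ‖u' - c'‖ ≤ (1 + Op) * S
  have haS : (‖u' - c'‖₊ : ℝ≥0∞) ≤ (1 + Op) * S := by
    apply ENNReal.le_of_forall_nnreal_lt
    intro r hr
    have hr' : (r : ℝ) < ‖u' - c'‖ := by exact_mod_cast hr
    obtain ⟨u, hu⟩ : ∃ u : X₁, (r : ℝ) * ‖u‖ < ‖(u' - c') u‖ := by
      by_contra h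
      push_neg at h
      exact absurd ((u' - c').opNorm_le_bound r.coe_nonneg fun u => h u) (not_le.mpr hr')
    have hu0 : u ≠ 0 := by
      intro h
      rw [h] at hu
      simp at hu
    have hun : (0:ℝ) < ‖u‖ := norm_pos_iff.mpr hu0
    have hun' : ‖u‖₊ ≠ 0 := by simpa using hu0
    set e : WithLp 1 (X₁ × X₂) := mk u (-(Bavg u)) with he
    have he0' : e ≠ 0 := fun h => hu0 ((hmk_zero _ _).mp h).1
    have he'e : e' e = (u' - c') u := by
      rw [he, he'mk, map_neg, ← hc'app, ContinuousLinearMap.sub_apply]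
      ring
    -- oscillation bound for u
    have hOscE : (∫⁻ x, (‖B x u - Bavg u‖₊ : ℝ≥0∞) ^ p ∂ν) ^ (1 / p)
        ≤ Op * (‖u‖₊ : ℝ≥0∞) := by
      set w : X₁ := ‖u‖⁻¹ • u with hw
      have hwnorm : ‖w‖ ≤ 1 := by
        rw [hw, norm_smul, norm_inv, norm_norm, inv_mul_cancel₀ hun.ne']
      have hwB : ∀ x, B x w = ‖u‖⁻¹ • (B x u) := by
        intro x
        rw [hw, _root_.map_smul]
      have hwavg : (⨍ y in Q, B y w ∂volume) = ‖u‖⁻¹ • (Bavg u) := by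
        simp only [hBavg]
        rw [show (⨍ y in Q, B y w ∂volume) = ∫ y, B y w ∂ν from havB (fun y => B y w),
          show (⨍ y in Q, B y u ∂volume) = ∫ y, B y u ∂ν from havB (fun y => B y u)]
        simp_rw [hwB]
        exact integral_smul _ _
      have hint : ∀ x, (‖B x w - (⨍ y in Q, B y w ∂volume)‖₊ : ℝ≥0∞)
          = ((‖u‖₊⁻¹ : ℝ≥0) : ℝ≥0∞) * (‖B x u - Bavg u‖₊ : ℝ≥0∞) := by
        intro x
        rw [hwavg, hwB x, ← smul_sub, ← ENNReal.coe_mul]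
        congr 1
        rw [nnnorm_smul, nnnorm_inv, nnnorm_norm]
      have hkey : Op ≥ ((‖u‖₊⁻¹ : ℝ≥0) : ℝ≥0∞) *
          (∫⁻ x, (‖B x u - Bavg u‖₊ : ℝ≥0∞) ^ p ∂ν) ^ (1 / p) := by
        have h1 : (⨍⁻ x in Q,
            (‖B x w - (⨍ y in Q, B y w ∂volume)‖₊ : ℝ≥0∞) ^ p ∂volume) ^ (1 / p)
            = ((‖u‖₊⁻¹ : ℝ≥0) : ℝ≥0∞) *
              (∫⁻ x, (‖B x u - Bavg u‖₊ : ℝ≥0∞) ^ p ∂ν) ^ (1 / p) := by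
          rw [hlav]
          simp_rw [hint]
          exact lintegral_const_mul_rpow hp0 _
            ((hBmeas u).sub stronglyMeasurable_const).enorm
        rw [← h1, hOp]
        exact le_iSup₂ (f := fun (w : X₁) (_ : ‖w‖ ≤ 1) =>
          (⨍⁻ x in Q,
            (‖B x w - (⨍ y in Q, B y w ∂volume)‖₊ : ℝ≥0∞) ^ p ∂volume) ^ (1 / p)) w hwnorm
      calc (∫⁻ x, (‖B x u - Bavg u‖₊ : ℝ≥0∞) ^ p ∂ν) ^ (1 / p)
          = (‖u‖₊ : ℝ≥0∞) * (((‖u‖₊⁻¹ : ℝ≥0) : ℝ≥0∞) *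
              (∫⁻ x, (‖B x u - Bavg u‖₊ : ℝ≥0∞) ^ p ∂ν) ^ (1 / p)) := by
            rw [← mul_assoc, ← ENNReal.coe_mul, mul_inv_cancel₀ hun', ENNReal.coe_one, one_mul]
        _ ≤ (‖u‖₊ : ℝ≥0∞) * Op := mul_le_mul_right hkey _
        _ = Op * (‖u‖₊ : ℝ≥0∞) := mul_comm _ _
    -- bound for the denominator
    have hVe : ∀ x, (‖V x e‖₊ : ℝ≥0∞) = (‖u‖₊ : ℝ≥0∞) + (‖B x u - Bavg u‖₊ : ℝ≥0∞) := by
      intro x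
      rw [he, hV, ← sub_eq_add_neg, hmk_nnnorm]
    have hD : (⨍⁻ x in Q, (‖V x e‖₊ : ℝ≥0∞) ^ p ∂volume) ^ (1 / p)
        ≤ (1 + Op) * (‖u‖₊ : ℝ≥0∞) := by
      rw [hlav]
      simp_rw [hVe]
      calc (∫⁻ x, ((‖u‖₊ : ℝ≥0∞) + (‖B x u - Bavg u‖₊ : ℝ≥0∞)) ^ p ∂ν) ^ (1 / p)
          ≤ (‖u‖₊ : ℝ≥0∞) + (∫⁻ x, (‖B x u - Bavg u‖₊ : ℝ≥0∞) ^ p ∂ν) ^ (1 / p) :=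
            lintegral_const_add_rpow_le hp.le
              ((hBmeas u).sub stronglyMeasurable_const).enorm.aemeasurable
        _ ≤ (‖u‖₊ : ℝ≥0∞) + Op * (‖u‖₊ : ℝ≥0∞) := add_le_add_right hOscE _
        _ = (1 + Op) * (‖u‖₊ : ℝ≥0∞) := by ring
    -- combine
    by_cases hOpT : Op = ⊤
    · have : (1 + Op) * S = ⊤ := by
        rw [hOpT]
        simp [ENNReal.mul_eq_top, hS0]
      rw [this]
      exact le_top
    have hFS : (‖e' e‖₊ : ℝ≥0∞) /
        (⨍⁻ x in Q, (‖V x e‖₊ : ℝ≥0∞) ^ p ∂volume) ^ (1 / p) ≤ S := by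
      rw [hS]
      exact le_iSup₂ (f := fun (e : WithLp 1 (X₁ × X₂)) (_ : e ≠ 0) =>
        (‖e' e‖₊ : ℝ≥0∞) / (⨍⁻ x in Q, (‖V x e‖₊ : ℝ≥0∞) ^ p ∂volume) ^ (1 / p)) e he0'
    have hstep : (‖e' e‖₊ : ℝ≥0∞) / ((1 + Op) * (‖u‖₊ : ℝ≥0∞)) ≤ S :=
      le_trans (ENNReal.div_le_div_left hD _) hFS
    have hOp1T : (1:ℝ≥0∞) + Op ≠ ⊤ := by
      rw [ENNReal.add_ne_top]
      exact ⟨ENNReal.one_ne_top, hOpT⟩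
    have hOp10 : (1:ℝ≥0∞) + Op ≠ 0 := by simp
    have hr1 : (r : ℝ≥0∞) ≤ (‖e' e‖₊ : ℝ≥0∞) / (‖u‖₊ : ℝ≥0∞) := by
      rw [ENNReal.le_div_iff_mul_le (Or.inl (by exact_mod_cast hun')) (Or.inl ENNReal.coe_ne_top),
        ← ENNReal.coe_mul]
      apply ENNReal.coe_le_coe.mpr
      rw [← NNReal.coe_le_coe]
      push_cast
      rw [he'e]
      exact hu.le
    have heq : (1 + Op) * ((‖e' e‖₊ : ℝ≥0∞) / ((1 + Op) * (‖u‖₊ : ℝ≥0∞)))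
        = (‖e' e‖₊ : ℝ≥0∞) / (‖u‖₊ : ℝ≥0∞) := by
      rw [← mul_div_assoc, ENNReal.mul_div_mul_left _ _ hOp10 hOp1T]
    calc (r : ℝ≥0∞) ≤ (‖e' e‖₊ : ℝ≥0∞) / (‖u‖₊ : ℝ≥0∞) := hr1
      _ = (1 + Op) * ((‖e' e‖₊ : ℝ≥0∞) / ((1 + Op) * (‖u‖₊ : ℝ≥0∞))) := heq.symm
      _ ≤ (1 + Op) * S := mul_le_mul_right hstep _
  -- the pointwise bound for the left-hand side
  set M₀ : ℝ≥0∞ := max (‖u' - c'‖₊ : ℝ≥0∞) (‖v'‖₊ : ℝ≥0∞) with hM₀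
  have hpt : ∀ x : Fin n → ℝ, (‖e'.comp (Vinv x)‖₊ : ℝ≥0∞)
      ≤ M₀ + (‖v'.comp (B x) - c'‖₊ : ℝ≥0∞) := by
    intro x
    have hreal : ‖e'.comp (Vinv x)‖
        ≤ max ‖u' - c'‖ ‖v'‖ + ‖v'.comp (B x) - c'‖ := by
      apply ContinuousLinearMap.opNorm_le_bound _ (by positivity)
      intro e
      set e₁ := ((WithLp.equiv 1 (X₁ × X₂)) e).1 with he₁
      set e₂ := ((WithLp.equiv 1 (X₁ × X₂)) e).2 with he₂
      have hne : ‖e‖ = ‖e₁‖ + ‖e₂‖ := hmk_norm e₁ e₂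
      have h1 : Vinv x e = mk e₁ (e₂ - B x e₁) := by
        rw [hmk_surj e, hVinv]
      have hval : e'.comp (Vinv x) e
          = (u' - c') e₁ + (c' - v'.comp (B x)) e₁ + v' e₂ := by
        rw [ContinuousLinearMap.comp_apply, h1, he'mk, map_sub]
        simp only [ContinuousLinearMap.sub_apply, ContinuousLinearMap.comp_apply]
        ring
      rw [hval, hne]
      have t1 : ‖(u' - c') e₁‖ ≤ ‖u' - c'‖ * ‖e₁‖ := (u' - c').le_opNorm e₁
      have t2 : ‖(c' - v'.comp (B x)) e₁‖ ≤ ‖v'.comp (B x) - c'‖ * ‖e₁‖ := by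
        rw [norm_sub_rev (v'.comp (B x)) c']
        exact (c' - v'.comp (B x)).le_opNorm e₁
      have t3 : ‖v' e₂‖ ≤ ‖v'‖ * ‖e₂‖ := v'.le_opNorm e₂
      have t4 : ‖(u' - c') e₁ + (c' - v'.comp (B x)) e₁ + v' e₂‖
          ≤ ‖(u' - c') e₁‖ + ‖(c' - v'.comp (B x)) e₁‖ + ‖v' e₂‖ :=
          (norm_add_le _ _).trans (add_le_add_left (norm_add_le _ _) _)
      have m1 : ‖u' - c'‖ ≤ max ‖u' - c'‖ ‖v'‖ := le_max_left _ _
      have m2 : ‖v'‖ ≤ max ‖u' - c'‖ ‖v'‖ := le_max_right _ _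
      nlinarith [norm_nonneg e₁, norm_nonneg e₂, norm_nonneg (v'.comp (B x) - c')]
    have hofmax : ENNReal.ofReal (max ‖u' - c'‖ ‖v'‖) = M₀ := by
      rcases le_total ‖u' - c'‖ ‖v'‖ with h | h
      · rw [max_eq_right h, hM₀, max_eq_right (by exact_mod_cast h),
          ofReal_norm, enorm_eq_nnnorm]
      · rw [max_eq_left h, hM₀, max_eq_left (by exact_mod_cast h),
          ofReal_norm, enorm_eq_nnnorm]
    calc (‖e'.comp (Vinv x)‖₊ : ℝ≥0∞)
        = ENNReal.ofReal ‖e'.comp (Vinv x)‖ := (ofReal_norm _).symm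
      _ ≤ ENNReal.ofReal (max ‖u' - c'‖ ‖v'‖ + ‖v'.comp (B x) - c'‖) :=
          ENNReal.ofReal_le_ofReal hreal
      _ = M₀ + (‖v'.comp (B x) - c'‖₊ : ℝ≥0∞) := by
          rw [ENNReal.ofReal_add (le_max_of_le_left (norm_nonneg _)) (norm_nonneg _),
            hofmax, ofReal_norm, enorm_eq_nnnorm]
  -- bounds for the two pieces
  have hM₀S : M₀ ≤ (1 + Op) * S := by
    apply max_le haS
    calc (‖v'‖₊ : ℝ≥0∞) ≤ S := hbS
      _ ≤ (1 + Op) * S := le_mul_of_one_le_left (zero_le) (le_add_right le_rfl)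
  -- final chain
  calc (⨍⁻ x in Q, (‖e'.comp (Vinv x)‖₊ : ℝ≥0∞) ^ p' ∂volume) ^ (1 / p')
      = (∫⁻ x, (‖e'.comp (Vinv x)‖₊ : ℝ≥0∞) ^ p' ∂ν) ^ (1 / p') := by rw [hlav]
    _ ≤ (∫⁻ x, (M₀ + (‖v'.comp (B x) - c'‖₊ : ℝ≥0∞)) ^ p' ∂ν) ^ (1 / p') := by
        apply ENNReal.rpow_le_rpow _ hp'inv0.le
        exact lintegral_mono fun x => ENNReal.rpow_le_rpow (hpt x) hp'0.le
    _ ≤ M₀ + (∫⁻ x, (‖v'.comp (B x) - c'‖₊ : ℝ≥0∞) ^ p' ∂ν) ^ (1 / p') :=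
        lintegral_const_add_rpow_le hp'.le
          ((hB'meas v').sub stronglyMeasurable_const).enorm.aemeasurable
    _ ≤ (1 + Op) * S + Op' * (‖v'‖₊ : ℝ≥0∞) := add_le_add hM₀S hOscC
    _ ≤ (1 + Op) * S + Op' * S := add_le_add_right (mul_le_mul_right hbS _) _
    _ = (1 + Op + Op') * S := by ring

end OpWeight15

end
end
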